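/- arXiv:1711.10906 — 6 statements merged into one kernel-verified Lean document; each statement's English description precedes it below -/
import Mathlib

section
/- Let G be a cubic graph of oddness 2 having a 2-factor whose odd cycles are exactly two cycles C_1 and C_2. If one of the cycles C ∈ {C_1, C_2} has length at least 5 and the other odd cycle contains an edge both of whose endpoints have no neighbor on C, then G admits a (1,1,1,3)-packing edge-coloring. -/
open SimpleGraph

variable {V : Type*}

/-- A graph is cubic if every vertex has exactly 3 neighbors. -/
def IsCubicGraph (G : SimpleGraph V) : Prop := ∀ v, (G.neighborSet v).ncard = 3

/-- A 2-factor: a spanning subgraph in which every vertex has exactly 2 neighbors. -/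
def IsTwoFactor {G : SimpleGraph V} (F : G.Subgraph) : Prop :=
  F.IsSpanning ∧ ∀ v, (F.neighborSet v).ncard = 2

/-- An `S`-packing edge-coloring of `G`, where the sequence `S` is given as a list `L`
of natural numbers: a partition (given by a coloring function) of the edges into
`L.length` classes, where two distinct edges in class `i` are at distance at least
`L.get i + 1` in the line graph of `G`. -/
def HasPackingEdgeColoring (G : SimpleGraph V) (L : List ℕ) : Prop :=
  ∃ c : G.edgeSet → Fin L.length,
    ∀ e f : G.edgeSet, e ≠ f → c e = c f →
      (L.get (c e) : ℕ∞) + 1 ≤ G.lineGraph.edist e f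

/-- The graph `G^k[A]`: vertices are the elements of `A` (a set of edges of `G`), two of them
being adjacent iff the corresponding edges are distinct and at distance at most `k` in `G`. -/
noncomputable def distPowerGraph (G : SimpleGraph V) (k : ℕ) (A : Set (Sym2 V)) :
    SimpleGraph A where
  Adj e f := e ≠ f ∧ ∃ (he : (e : Sym2 V) ∈ G.edgeSet) (hf : (f : Sym2 V) ∈ G.edgeSet),
      G.lineGraph.edist ⟨e, he⟩ ⟨f, hf⟩ ≤ k
  symm := by
    constructor
    rintro e f ⟨hne, he, hf, hd⟩
    exact ⟨hne.symm, hf, he, by rwa [SimpleGraph.edist_comm]⟩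
  loopless := by constructor; rintro e ⟨hne, -⟩; exact hne rfl

/-- The set of odd cycles of a 2-factor `F`, viewed as the connected components
of its spanning coercion with an odd number of vertices. -/
def oddCycles {G : SimpleGraph V} (F : G.Subgraph) :
    Set F.spanningCoe.ConnectedComponent :=
  {c | Odd c.supp.ncard}

/-- The set of edges of a 2-factor `F` lying on the cycle (connected component) `c`. -/
def cycleEdges {G : SimpleGraph V} (F : G.Subgraph)
    (c : F.spanningCoe.ConnectedComponent) : Set (Sym2 V) :=
  {e ∈ F.edgeSet | ∀ v ∈ e, v ∈ c.supp}

/-- A set `A` of edges of a 2-factor `F` is of type I if it contains exactly one edge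
per odd cycle of `F` and no edge of any even cycle of `F`. -/
def IsTypeI {G : SimpleGraph V} (F : G.Subgraph) (A : Set (Sym2 V)) : Prop :=
  A ⊆ F.edgeSet ∧ ∀ c : F.spanningCoe.ConnectedComponent,
    (Odd c.supp.ncard → (A ∩ cycleEdges F c).ncard = 1) ∧
    (¬ Odd c.supp.ncard → A ∩ cycleEdges F c = ∅)

/-- A set `B` of edges of a 2-factor `F` is of type II if no two of its edges are adjacent
in `G` and it contains exactly `⌊n/2⌋` edges of every cycle of `F` of length `n`. -/
def IsTypeII {G : SimpleGraph V} (F : G.Subgraph) (B : Set (Sym2 V)) : Prop :=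
  B ⊆ F.edgeSet ∧
  (∀ e ∈ B, ∀ f ∈ B, e ≠ f → ∀ v : V, ¬(v ∈ e ∧ v ∈ f)) ∧
  ∀ c : F.spanningCoe.ConnectedComponent,
    (B ∩ cycleEdges F c).ncard = c.supp.ncard / 2



namespace PackAux

variable {V : Type*}

/-- max degree ≤ 1 -/
def Mat (M : SimpleGraph V) : Prop := ∀ v : V, (M.neighborSet v).Subsingleton

lemma two_le_edist {W : Type*} {G : SimpleGraph W} {a b : W} (h1 : a ≠ b)
    (h2 : ¬ G.Adj a b) : 2 ≤ G.edist a b := by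
  rw [SimpleGraph.edist_eq_sInf]
  refine le_sInf ?_
  rintro _ ⟨p, rfl⟩
  cases p with
  | nil => exact absurd rfl h1
  | cons h q =>
    cases q with
    | nil => exact absurd h h2
    | cons h' q' =>
      simp only [Walk.length_cons]
      have : (2:ℕ) ≤ q'.length + 1 + 1 := by omega
      exact_mod_cast this

lemma four_le_edist {W : Type*} {G : SimpleGraph W} {a b : W} (h0 : a ≠ b)
    (h1 : ¬ G.Adj a b) (h2 : ∀ g, G.Adj a g → ¬ G.Adj g b)
    (h3 : ∀ g h, G.Adj a g → G.Adj g h → ¬ G.Adj h b) : 4 ≤ G.edist a b := by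
  rw [SimpleGraph.edist_eq_sInf]
  refine le_sInf ?_
  rintro _ ⟨p, rfl⟩
  cases p with
  | nil => exact absurd rfl h0
  | cons ha q =>
    cases q with
    | nil => exact absurd ha h1
    | cons hb q' =>
      cases q' with
      | nil => exact absurd hb (h2 _ ha)
      | cons hc q'' =>
        cases q'' with
        | nil => exact absurd hc (h3 _ _ ha hb)
        | cons hd q''' =>
          simp only [Walk.length_cons]
          have : (4:ℕ) ≤ q'''.length + 1 + 1 + 1 + 1 := by omega
          exact_mod_cast this

lemma exists_adj_of_mem_edge {G : SimpleGraph V} {e : Sym2 V} (he : e ∈ G.edgeSet) {v : V}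
    (hv : v ∈ e) : ∃ w, G.Adj v w ∧ e = s(v, w) := by
  induction e with
  | _ a b =>
    rcases Sym2.mem_iff.mp hv with rfl | rfl
    · exact ⟨b, he, rfl⟩
    · exact ⟨a, (G.mem_edgeSet.mp he).symm, Sym2.eq_swap.symm⟩

lemma mem_of_walk {H : SimpleGraph V} {S : Set V}
    (hS : ∀ w ∈ S, ∀ z, H.Adj w z → z ∈ S) :
    ∀ {a b : V} (_ : H.Walk a b), a ∈ S → b ∈ S := by
  intro a b p
  induction p with
  | nil => exact fun h => h
  | cons h q ih => exact fun ha => ih (hS _ ha _ h)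

lemma supp_subset_of_closed {H : SimpleGraph V} {S : Set V}
    (hS : ∀ w ∈ S, ∀ z, H.Adj w z → z ∈ S) {v : V} (hv : v ∈ S) :
    (H.connectedComponentMk v).supp ⊆ S := by
  intro z hz
  rw [ConnectedComponent.mem_supp_iff] at hz
  obtain ⟨p⟩ := (ConnectedComponent.eq.mp hz.symm : H.Reachable v z)
  exact mem_of_walk hS p hv

lemma nbr_delete_of_not_mem {H : SimpleGraph V} {e : Sym2 V} {w : V} (hw : w ∉ e) :
    (H.deleteEdges {e}).neighborSet w = H.neighborSet w := by
  ext z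
  simp only [mem_neighborSet, deleteEdges_adj, Set.mem_singleton_iff, and_iff_left_iff_imp]
  intro _ h
  exact hw (h ▸ Sym2.mem_mk_left w z)

lemma nbr_delete_left {H : SimpleGraph V} {u v : V} :
    (H.deleteEdges {s(v, u)}).neighborSet v = H.neighborSet v \ {u} := by
  ext z
  simp only [mem_neighborSet, deleteEdges_adj, Set.mem_singleton_iff, Set.mem_diff]
  constructor
  · rintro ⟨h1, h2⟩
    refine ⟨h1, fun hz => h2 ?_⟩
    subst hz; rfl
  · rintro ⟨h1, h2⟩
    refine ⟨h1, fun hz => ?_⟩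
    rcases Sym2.eq_iff.mp hz with ⟨-, rfl⟩ | ⟨h3, rfl⟩
    · exact h2 rfl
    · exact absurd h1 (H.irrefl)

lemma nbr_delete_right {H : SimpleGraph V} {u v : V} :
    (H.deleteEdges {s(v, u)}).neighborSet u = H.neighborSet u \ {v} := by
  have : s(v, u) = s(u, v) := Sym2.eq_swap
  rw [this, nbr_delete_left]




lemma getVert_ne_add_two {H : SimpleGraph V} {a b : V} (p : H.Walk a b) (hp : p.IsPath) :
    ∀ i, i + 2 ≤ p.length → p.getVert i ≠ p.getVert (i + 2) := by
  induction p with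
  | nil => intro i hi; simp at hi
  | cons h q ih =>
    intro i hi
    match i with
    | 0 =>
      show ¬ (Walk.cons h q).getVert 0 = (Walk.cons h q).getVert 2
      rw [show (2:ℕ) = 1 + 1 from rfl, Walk.getVert_cons_succ]
      simp only [Walk.getVert_zero]
      intro hcon
      have h1 : q.getVert 1 ∈ q.support := by
        rw [Walk.mem_support_iff_exists_getVert]
        refine ⟨1, rfl, ?_⟩
        simp only [Walk.length_cons] at hi; omega
      rw [← hcon] at h1
      exact (((Walk.cons_isPath_iff h q).mp hp)).2 h1
    | (i+1) =>
      have e1 : i + 1 + 2 = (i + 2) + 1 := by omega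
      rw [e1, Walk.getVert_cons_succ, Walk.getVert_cons_succ]
      exact ih (((Walk.cons_isPath_iff h q).mp hp)).1 i (by simp only [Walk.length_cons] at hi; omega)

lemma mat_flip {H M : SimpleGraph V} (h1 : Mat M) (h2 : Mat (H \ M))
    {a b : V} (p : H.Walk a b) (hp : p.IsPath) {i : ℕ} (hi : i + 1 < p.length) :
    (M.Adj (p.getVert i) (p.getVert (i+1)) ↔ ¬ M.Adj (p.getVert (i+1)) (p.getVert (i+2))) := by
  have hxy : H.Adj (p.getVert i) (p.getVert (i+1)) := p.adj_getVert_succ (by omega)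
  have hyz : H.Adj (p.getVert (i+1)) (p.getVert (i+2)) := by
    have := p.adj_getVert_succ (show i+1 < p.length by omega)
    simpa [show i+1+1 = i+2 from rfl] using this
  have hxz : p.getVert i ≠ p.getVert (i+2) := getVert_ne_add_two p hp i (by omega)
  constructor
  · intro hm hm2
    exact hxz (h1 (p.getVert (i+1)) hm.symm hm2)
  · intro hnm
    by_contra hnm2
    have d1 : (H \ M).Adj (p.getVert (i+1)) (p.getVert i) :=
      (SimpleGraph.sdiff_adj _ _ _ _).mpr ⟨hxy.symm, fun h => hnm2 h.symm⟩
    have d2 : (H \ M).Adj (p.getVert (i+1)) (p.getVert (i+2)) :=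
      (SimpleGraph.sdiff_adj _ _ _ _).mpr ⟨hyz, hnm⟩
    exact hxz (h2 (p.getVert (i+1)) d1 d2)

lemma mat_parity {H M : SimpleGraph V} (h1 : Mat M) (h2 : Mat (H \ M))
    {a b : V} (p : H.Walk a b) (hp : p.IsPath) :
    ∀ i, i < p.length →
      (M.Adj (p.getVert i) (p.getVert (i+1)) ↔ (Even i ↔ M.Adj a (p.getVert 1))) := by
  intro i
  induction i with
  | zero =>
    intro h0
    have h00 : Even 0 := Even.zero
    have h01 : (0:ℕ) + 1 = 1 := rfl
    rw [h01, Walk.getVert_zero]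
    tauto
  | succ i ih =>
    intro hi
    have hflip := mat_flip h1 h2 p hp (show i+1 < p.length from hi)
    have hih := ih (by omega)
    rw [Nat.even_add_one]
    have : i + 1 + 1 = i + 2 := rfl
    rw [this]
    tauto


lemma reachable_of_deg [Fintype V] {H : SimpleGraph V} {v u : V} (hvu : v ≠ u)
    (hdeg : ∀ w, w ≠ v → w ≠ u → (H.neighborSet w).ncard = 2 ∨ (H.neighborSet w).ncard = 0)
    (hv : (H.neighborSet v).ncard = 1) (hu : (H.neighborSet u).ncard = 1) :
    H.Reachable v u := by
  classical
  by_contra hr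
  set S : Set V := (H.connectedComponentMk v).supp with hS
  have hvS : v ∈ S := by rw [hS, ConnectedComponent.mem_supp_iff]
  have hclosed : ∀ w ∈ S, ∀ z, H.Adj w z → z ∈ S := by
    intro w hw z hz
    rw [hS, ConnectedComponent.mem_supp_iff] at hw ⊢
    rw [← hw]
    exact (ConnectedComponent.connectedComponentMk_eq_of_adj hz.symm)
  have huS : u ∉ S := by
    intro h
    rw [hS, ConnectedComponent.mem_supp_iff] at h
    exact hr (ConnectedComponent.eq.mp h).symm
  let Hs : SimpleGraph V :=
    { Adj := fun a b => H.Adj a b ∧ a ∈ S ∧ b ∈ S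
      symm := ⟨fun a b ⟨h, ha, hb⟩ => ⟨h.symm, hb, ha⟩⟩
      loopless := ⟨fun a ⟨h, _⟩ => H.irrefl h⟩ }
  have hnbr : ∀ w ∈ S, Hs.neighborSet w = H.neighborSet w := by
    intro w hw
    ext z
    simp only [mem_neighborSet]
    exact ⟨fun ⟨h, _, _⟩ => h, fun h => ⟨h, hw, hclosed w hw z h⟩⟩
  have hnbr2 : ∀ w, w ∉ S → Hs.neighborSet w = ∅ := by
    intro w hw
    ext z
    simp only [mem_neighborSet, Set.mem_empty_iff_false, iff_false]
    rintro ⟨-, hw', -⟩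
    exact hw hw'
  have hdeg_eq : ∀ w : V, Hs.degree w = (Hs.neighborSet w).ncard := by
    intro w
    rw [SimpleGraph.degree, neighborFinset_def]
    exact (Set.ncard_eq_toFinset_card' _).symm
  have hsum := Hs.sum_degrees_eq_twice_card_edges
  have heven : Even (∑ w : V, Hs.degree w) := ⟨Hs.edgeFinset.card, by omega⟩
  have hvmem : v ∈ (Finset.univ : Finset V) := Finset.mem_univ v
  rw [← Finset.add_sum_erase _ _ hvmem] at heven
  have heven2 : Even (∑ w ∈ Finset.univ.erase v, Hs.degree w) := by
    apply Finset.even_sum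
    intro w hw
    have hwv : w ≠ v := (Finset.mem_erase.mp hw).1
    rw [hdeg_eq]
    by_cases hwS : w ∈ S
    · by_cases hwu : w = u
      · exact absurd (hwu ▸ hwS) huS
      · rcases hdeg w hwv hwu with h2 | h0
        · rw [hnbr w hwS, h2]; exact ⟨1, rfl⟩
        · rw [hnbr w hwS, h0]; exact ⟨0, rfl⟩
    · rw [hnbr2 w hwS]
      simp
  have hdv : Hs.degree v = 1 := by rw [hdeg_eq, hnbr v hvS, hv]
  rw [hdv] at heven
  rcases heven with ⟨k, hk⟩
  rcases heven2 with ⟨m, hm⟩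
  omega

lemma length_odd_of_cycle [Fintype V] {H : SimpleGraph V} {v u : V} (hadj : H.Adj v u)
    (hdeg : ∀ w : V, (H.neighborSet w).ncard = 0 ∨ (H.neighborSet w).ncard = 2)
    (hinv : ∀ w : V, (∀ z ∈ (H.connectedComponentMk w).supp, (H.neighborSet z).ncard = 2) →
        Even (H.connectedComponentMk w).supp.ncard)
    (p : (H.deleteEdges {s(v,u)}).Walk v u) (hp : p.IsPath) : Odd p.length := by
  classical
  have hle : H.deleteEdges {s(v,u)} ≤ H := SimpleGraph.deleteEdges_le _
  have hvu : v ≠ u := hadj.ne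
  have hL1 : 1 ≤ p.length := by
    rcases Nat.eq_zero_or_pos p.length with h0 | h1
    · exact absurd (Walk.eq_of_length_eq_zero h0) hvu
    · exact h1
  have hnadj : ¬ (H.deleteEdges {s(v,u)}).Adj v u := by
    simp [SimpleGraph.deleteEdges_adj]
  -- membership of getVerts in support
  have hgmem : ∀ n, n ≤ p.length → p.getVert n ∈ p.support := by
    intro n hn
    rw [Walk.mem_support_iff_exists_getVert]
    exact ⟨n, rfl, hn⟩
  set S0 : Set V := {z | z ∈ p.support} with hS0
  have hvS0 : v ∈ S0 := p.start_mem_support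
  have huS0 : u ∈ S0 := p.end_mem_support
  -- every vertex of S0 has both H-neighbors in S0
  have hkey : ∀ w ∈ S0, ∀ z, H.Adj w z → z ∈ S0 := by
    intro w hw z hz
    obtain ⟨n, hn, hnle⟩ := Walk.mem_support_iff_exists_getVert.mp hw
    have hnbr2 : (H.neighborSet w).ncard = 2 := by
      rcases hdeg w with h0 | h2
      · exfalso
        have : z ∈ H.neighborSet w := hz
        have : (H.neighborSet w).Nonempty := ⟨z, this⟩
        rw [← Set.ncard_pos (Set.toFinite _)] at this
        omega
      · exact h2
    -- identify two distinct H-neighbors of w lying in S0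
    have hpair : ∃ z1 z2 : V, z1 ≠ z2 ∧ z1 ∈ S0 ∧ z2 ∈ S0 ∧
        z1 ∈ H.neighborSet w ∧ z2 ∈ H.neighborSet w := by
      by_cases hn0 : n = 0
      · -- w = v
        subst hn0
        rw [Walk.getVert_zero] at hn
        subst hn
        refine ⟨u, p.getVert 1, ?_, huS0, hgmem 1 hL1, hadj, ?_⟩
        · intro hcon
          have := p.adj_getVert_succ (show 0 < p.length by omega)
          rw [Walk.getVert_zero, ← hcon] at this
          exact hnadj this
        · have := p.adj_getVert_succ (show 0 < p.length by omega)
          rw [Walk.getVert_zero] at this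
          exact hle this
      · by_cases hnL : n = p.length
        · -- w = u
          subst hnL
          rw [Walk.getVert_length] at hn
          subst hn
          have e1 : p.length - 1 + 1 = p.length := by omega
          have hadj' : (H.deleteEdges {s(v,u)}).Adj (p.getVert (p.length - 1)) (p.getVert p.length) := by
            have := p.adj_getVert_succ (show p.length - 1 < p.length by omega)
            rwa [e1] at this
          rw [Walk.getVert_length] at hadj'
          refine ⟨v, p.getVert (p.length - 1), ?_, hvS0, hgmem _ (by omega), hadj.symm, ?_⟩
          · intro hcon
            rw [← hcon] at hadj'
            exact hnadj hadj'
          · exact (hle hadj').symm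
        · -- interior
          have hn1 : 1 ≤ n := by omega
          have hnL' : n + 1 ≤ p.length := by omega
          have e1 : n - 1 + 1 = n := by omega
          have e2 : n - 1 + 2 = n + 1 := by omega
          have ha1 : (H.deleteEdges {s(v,u)}).Adj (p.getVert (n-1)) (p.getVert n) := by
            have := p.adj_getVert_succ (show n - 1 < p.length by omega)
            rwa [e1] at this
          have ha2 : (H.deleteEdges {s(v,u)}).Adj (p.getVert n) (p.getVert (n+1)) :=
            p.adj_getVert_succ (by omega)
          have hne12 : p.getVert (n-1) ≠ p.getVert (n+1) := by
            have := getVert_ne_add_two p hp (n-1) (by omega)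
            rwa [e2] at this
          subst hn
          exact ⟨p.getVert (n-1), p.getVert (n+1), hne12, hgmem _ (by omega),
            hgmem _ (by omega), (hle ha1).symm, hle ha2⟩
    obtain ⟨z1, z2, hz12, hz1S, hz2S, hz1n, hz2n⟩ := hpair
    have hsub : {z1, z2} ⊆ H.neighborSet w := by
      intro t ht
      rcases ht with rfl | ht
      · exact hz1n
      · rw [Set.mem_singleton_iff] at ht; subst ht; exact hz2n
    have hcard : ({z1, z2} : Set V).ncard = 2 := Set.ncard_pair hz12
    have : H.neighborSet w = {z1, z2} :=
      (Set.eq_of_subset_of_ncard_le hsub (by omega) (Set.toFinite _)).symm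
    have hz' : z ∈ H.neighborSet w := hz
    rw [this] at hz'
    rcases hz' with rfl | hz'
    · exact hz1S
    · rw [Set.mem_singleton_iff] at hz'; subst hz'; exact hz2S
  -- S0 equals the component of v
  have hsub1 : (H.connectedComponentMk v).supp ⊆ S0 := supp_subset_of_closed hkey hvS0
  have hsub2 : S0 ⊆ (H.connectedComponentMk v).supp := by
    intro z hz
    have hz' : z ∈ p.support := hz
    have hreach : (H.deleteEdges {s(v,u)}).Reachable v z := ⟨p.takeUntil z hz'⟩
    rw [ConnectedComponent.mem_supp_iff]
    exact ConnectedComponent.sound (hreach.mono hle).symm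
  have hSeq : (H.connectedComponentMk v).supp = S0 := Set.Subset.antisymm hsub1 hsub2
  -- cardinality of S0
  have hcardS0 : S0.ncard = p.length + 1 := by
    have : S0 = (↑p.support.toFinset : Set V) := by
      ext z; simp [hS0]
    rw [this, Set.ncard_coe_finset, List.toFinset_card_of_nodup hp.support_nodup,
      Walk.length_support]
  -- all degrees on the component are 2
  have hreg : ∀ z ∈ (H.connectedComponentMk v).supp, (H.neighborSet z).ncard = 2 := by
    intro z hz
    rcases hdeg z with h0 | h2
    · exfalso
      rw [hSeq] at hz
      obtain ⟨n, hn, hnle⟩ := Walk.mem_support_iff_exists_getVert.mp hz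
      have : (H.neighborSet z).Nonempty := by
        by_cases hnL : n = p.length
        · subst hnL; rw [Walk.getVert_length] at hn; subst hn
          exact ⟨v, hadj.symm⟩
        · have := p.adj_getVert_succ (show n < p.length by omega)
          rw [hn] at this
          exact ⟨p.getVert (n+1), hle this⟩
      rw [← Set.ncard_pos (Set.toFinite _)] at this
      omega
    · exact h2
  have heven := hinv v hreg
  rw [hSeq, hcardS0] at heven
  rcases heven with ⟨k, hk⟩
  exact ⟨k - 1, by omega⟩
lemma mem_supp_of_adj {H : SimpleGraph V} {c : H.ConnectedComponent} {z t : V}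
    (hz : z ∈ c.supp) (ht : H.Adj z t) : t ∈ c.supp := by
  rw [ConnectedComponent.mem_supp_iff] at hz ⊢
  rw [← hz]
  exact ConnectedComponent.connectedComponentMk_eq_of_adj ht.symm

lemma three_le_ncard [Fintype V] {s : Set V} {a b c : V} (ha : a ∈ s) (hb : b ∈ s) (hc : c ∈ s)
    (hab : a ≠ b) (hac : a ≠ c) (hbc : b ≠ c) : 3 ≤ s.ncard := by
  have hsub : ({a, b, c} : Set V) ⊆ s := by
    intro t ht
    rcases ht with rfl | rfl | ht
    · exact ha
    · exact hb
    · rw [Set.mem_singleton_iff] at ht; subst ht; exact hc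
  have h3 : ({a, b, c} : Set V).ncard = 3 := by
    rw [Set.ncard_insert_of_notMem (by simp [hab, hac]) (Set.toFinite _), Set.ncard_pair hbc]
  rw [← h3]
  exact Set.ncard_le_ncard hsub (Set.toFinite _)

lemma comp_transfer {H H' : SimpleGraph V} (hle : H' ≤ H) {w : V}
    (hclosed : ∀ z ∈ (H'.connectedComponentMk w).supp, ∀ t, H.Adj z t → H'.Adj z t) :
    (H.connectedComponentMk w).supp = (H'.connectedComponentMk w).supp := by
  apply Set.Subset.antisymm
  · apply supp_subset_of_closed
    · intro z hz t ht
      exact mem_supp_of_adj hz (hclosed z hz t ht)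
    · rw [ConnectedComponent.mem_supp_iff]
  · intro z hz
    rw [ConnectedComponent.mem_supp_iff] at hz ⊢
    exact ConnectedComponent.sound ((ConnectedComponent.eq.mp hz).mono hle)

lemma invariant_delete [Fintype V] {H : SimpleGraph V} {v u : V} (hadj : H.Adj v u)
    (hdeg : ∀ w : V, (H.neighborSet w).ncard ≤ 2)
    (hinv : ∀ w : V, (∀ z ∈ (H.connectedComponentMk w).supp, (H.neighborSet z).ncard = 2) →
        Even (H.connectedComponentMk w).supp.ncard) :
    ∀ w : V, (∀ z ∈ ((H.deleteEdges {s(v,u)}).connectedComponentMk w).supp,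
        ((H.deleteEdges {s(v,u)}).neighborSet z).ncard = 2) →
      Even ((H.deleteEdges {s(v,u)}).connectedComponentMk w).supp.ncard := by
  intro w hreg
  have hle : H.deleteEdges {s(v,u)} ≤ H := SimpleGraph.deleteEdges_le _
  have hvS : v ∉ ((H.deleteEdges {s(v,u)}).connectedComponentMk w).supp := by
    intro hv
    have h2 := hreg v hv
    rw [nbr_delete_left] at h2
    have hu' : u ∈ H.neighborSet v := hadj
    have h3 := Set.ncard_diff_singleton_add_one hu' (Set.toFinite _)
    have h4 := hdeg v
    omega
  have huS : u ∉ ((H.deleteEdges {s(v,u)}).connectedComponentMk w).supp := by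
    intro hv
    have h2 := hreg u hv
    rw [nbr_delete_right] at h2
    have hu' : v ∈ H.neighborSet u := hadj.symm
    have h3 := Set.ncard_diff_singleton_add_one hu' (Set.toFinite _)
    have h4 := hdeg u
    omega
  have hclosed : ∀ z ∈ ((H.deleteEdges {s(v,u)}).connectedComponentMk w).supp,
      ∀ t, H.Adj z t → (H.deleteEdges {s(v,u)}).Adj z t := by
    intro z hz t ht
    rw [SimpleGraph.deleteEdges_adj]
    refine ⟨ht, ?_⟩
    rw [Set.mem_singleton_iff]
    intro hcon
    rcases Sym2.eq_iff.mp hcon with ⟨rfl, rfl⟩ | ⟨rfl, rfl⟩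
    · exact hvS hz
    · exact huS hz
  have heq := comp_transfer hle hclosed
  have hregH : ∀ z ∈ (H.connectedComponentMk w).supp, (H.neighborSet z).ncard = 2 := by
    intro z hz
    rw [heq] at hz
    have h2 := hreg z hz
    have hznotv : z ≠ v := fun h => hvS (h ▸ hz)
    have hznotu : z ≠ u := fun h => huS (h ▸ hz)
    rw [nbr_delete_of_not_mem (by
      rw [Sym2.mem_iff]; rintro (rfl | rfl); exact hznotv rfl; exact hznotu rfl)] at h2
    exact h2
  have := hinv w hregH
  rwa [heq] at this

lemma no_edge_case {H : SimpleGraph V} (h : ∀ a b : V, ¬ H.Adj a b) :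
    ∃ M : SimpleGraph V, M ≤ H ∧ Mat M ∧ Mat (H \ M) := by
  refine ⟨⊥, bot_le, fun v z1 hz1 z2 hz2 => absurd hz1 (by simp), fun v z1 hz1 z2 hz2 => ?_⟩
  exact absurd ((SimpleGraph.sdiff_adj _ _ _ _).mp hz1).1 (h _ _)

lemma two_matchings [Fintype V] :
    ∀ (n : ℕ) (H : SimpleGraph V), H.edgeSet.ncard ≤ n →
    (∀ v : V, (H.neighborSet v).ncard ≤ 2) →
    (∀ w : V, (∀ z ∈ (H.connectedComponentMk w).supp, (H.neighborSet z).ncard = 2) →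
        Even (H.connectedComponentMk w).supp.ncard) →
    ∃ M : SimpleGraph V, M ≤ H ∧ Mat M ∧ Mat (H \ M) := by
  classical
  intro n
  induction n with
  | zero =>
    intro H hcard hdeg hinv
    apply no_edge_case
    intro a b hab
    have hmem : s(a,b) ∈ H.edgeSet := hab
    have h1 : 1 ≤ H.edgeSet.ncard := by
      rw [Nat.one_le_iff_ne_zero, Ne, Set.ncard_eq_zero (Set.toFinite _)]
      intro h
      rw [h] at hmem
      exact hmem
    omega
  | succ n ih =>
    intro H hcard hdeg hinv
    by_cases hedge : ∀ a b : V, ¬ H.Adj a b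
    · exact no_edge_case hedge
    push_neg at hedge
    obtain ⟨v, u, hadj⟩ := hedge
    -- from here on we study the edge s(v,u) in the degree-1 case, or any edge otherwise;
    -- first the common facts for deleting an edge s(v,u) once we fix v,u appropriately.
    by_cases hone : ∃ x : V, (H.neighborSet x).ncard = 1
    · -- CASE B : some vertex of degree one
      clear hadj v u
      obtain ⟨v, hv1⟩ := hone
      obtain ⟨u, hu⟩ := Set.ncard_eq_one.mp hv1
      have hadj : H.Adj v u := by
        have h : u ∈ H.neighborSet v := by rw [hu]; exact rfl
        exact h
      have hvu : v ≠ u := hadj.ne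
      have hle : H.deleteEdges {s(v,u)} ≤ H := SimpleGraph.deleteEdges_le _
      have hnsub : ∀ w, (H.deleteEdges {s(v,u)}).neighborSet w ⊆ H.neighborSet w :=
        fun w z hz => hle hz
      have hcard' : (H.deleteEdges {s(v,u)}).edgeSet.ncard ≤ n := by
        rw [SimpleGraph.edgeSet_deleteEdges]
        have hmemE : s(v,u) ∈ H.edgeSet := hadj
        have := Set.ncard_diff_singleton_add_one hmemE (Set.toFinite _)
        omega
      have hdeg' : ∀ w, ((H.deleteEdges {s(v,u)}).neighborSet w).ncard ≤ 2 :=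
        fun w => le_trans (Set.ncard_le_ncard (hnsub w) (Set.toFinite _)) (hdeg w)
      obtain ⟨M, hMle, hM1, hM2⟩ := ih _ hcard' hdeg' (invariant_delete hadj hdeg hinv)
      have hnv : (H.deleteEdges {s(v,u)}).neighborSet v = ∅ := by
        rw [nbr_delete_left, hu]; simp
      have hMv : M.neighborSet v = ∅ := by
        apply Set.eq_empty_of_subset_empty; rw [← hnv]; exact fun z hz => hMle hz
      have hHveq : H.neighborSet v = {u} := hu
      have hsame : ∀ w z : V, w ≠ v → w ≠ u →
          (H.Adj w z ↔ (H.deleteEdges {s(v,u)}).Adj w z) := by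
        intro w z h1 h2
        rw [SimpleGraph.deleteEdges_adj, Set.mem_singleton_iff]
        constructor
        · intro h; refine ⟨h, fun hc => ?_⟩
          rcases Sym2.eq_iff.mp hc with ⟨rfl, rfl⟩ | ⟨rfl, rfl⟩
          exacts [h1 rfl, h2 rfl]
        · exact fun h => h.1
      by_cases hMu : ∃ z, M.Adj u z
      · refine ⟨M, le_trans hMle hle, hM1, ?_⟩
        intro w
        by_cases hwv : w = v
        · intro z1 hz1 z2 hz2
          rw [hwv] at hz1 hz2
          have e1 : z1 ∈ H.neighborSet v := ((SimpleGraph.sdiff_adj _ _ _ _).mp hz1).1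
          have e2 : z2 ∈ H.neighborSet v := ((SimpleGraph.sdiff_adj _ _ _ _).mp hz2).1
          rw [hHveq, Set.mem_singleton_iff] at e1 e2
          rw [e1, e2]
        by_cases hwu : w = u
        · intro z1 hz1 z2 hz2
          rw [hwu] at hz1 hz2
          obtain ⟨z, hz⟩ := hMu
          have hzH : z ∈ H.neighborSet u := hle (hMle hz)
          have hz1H : z1 ∈ H.neighborSet u := ((SimpleGraph.sdiff_adj _ _ _ _).mp hz1).1
          have hz2H : z2 ∈ H.neighborSet u := ((SimpleGraph.sdiff_adj _ _ _ _).mp hz2).1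
          have hz1M : ¬ M.Adj u z1 := ((SimpleGraph.sdiff_adj _ _ _ _).mp hz1).2
          have hz2M : ¬ M.Adj u z2 := ((SimpleGraph.sdiff_adj _ _ _ _).mp hz2).2
          by_contra hne12
          have h3 := three_le_ncard hzH hz1H hz2H (fun h => hz1M (h ▸ hz))
            (fun h => hz2M (h ▸ hz)) hne12
          have := hdeg u
          omega
        · intro z1 hz1 z2 hz2
          refine hM2 w ?_ ?_
          · exact (SimpleGraph.sdiff_adj _ _ _ _).mpr
              ⟨(hsame w z1 hwv hwu).mp ((SimpleGraph.sdiff_adj _ _ _ _).mp hz1).1,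
               ((SimpleGraph.sdiff_adj _ _ _ _).mp hz1).2⟩
          · exact (SimpleGraph.sdiff_adj _ _ _ _).mpr
              ⟨(hsame w z2 hwv hwu).mp ((SimpleGraph.sdiff_adj _ _ _ _).mp hz2).1,
               ((SimpleGraph.sdiff_adj _ _ _ _).mp hz2).2⟩
      · push_neg at hMu
        have hM'adj : ∀ a b : V, (M ⊔ SimpleGraph.fromEdgeSet {s(v,u)}).Adj a b ↔
            (M.Adj a b ∨ (a = v ∧ b = u) ∨ (a = u ∧ b = v)) := by
          intro a b
          rw [SimpleGraph.sup_adj, SimpleGraph.fromEdgeSet_adj, Set.mem_singleton_iff]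
          constructor
          · rintro (h | ⟨h1, h2⟩)
            · exact Or.inl h
            · rcases Sym2.eq_iff.mp h1 with ⟨rfl, rfl⟩ | ⟨rfl, rfl⟩
              · exact Or.inr (Or.inl ⟨rfl, rfl⟩)
              · exact Or.inr (Or.inr ⟨rfl, rfl⟩)
          · rintro (h | ⟨rfl, rfl⟩ | ⟨rfl, rfl⟩)
            · exact Or.inl h
            · exact Or.inr ⟨rfl, hvu⟩
            · exact Or.inr ⟨Sym2.eq_swap, hvu.symm⟩
        refine ⟨M ⊔ SimpleGraph.fromEdgeSet {s(v,u)}, ?_, ?_, ?_⟩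
        · refine sup_le (le_trans hMle hle) ?_
          intro a b hab
          rw [SimpleGraph.fromEdgeSet_adj, Set.mem_singleton_iff] at hab
          rcases Sym2.eq_iff.mp hab.1 with ⟨rfl, rfl⟩ | ⟨rfl, rfl⟩
          exacts [hadj, hadj.symm]
        · intro w
          by_cases hwv : w = v
          · have hz : ∀ z, (M ⊔ SimpleGraph.fromEdgeSet {s(v,u)}).Adj v z → z = u := by
              intro z hz
              rcases (hM'adj v z).mp hz with h | ⟨-, rfl⟩ | ⟨hvu', -⟩
              · exact absurd (show z ∈ M.neighborSet v from h) (by rw [hMv]; simp)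
              · rfl
              · exact absurd hvu' hvu
            intro z1 hz1 z2 hz2
            rw [hwv] at hz1 hz2
            rw [hz z1 hz1, hz z2 hz2]
          by_cases hwu : w = u
          · have hz : ∀ z, (M ⊔ SimpleGraph.fromEdgeSet {s(v,u)}).Adj u z → z = v := by
              intro z hz
              rcases (hM'adj u z).mp hz with h | ⟨huv', -⟩ | ⟨-, rfl⟩
              · exact absurd h (hMu z)
              · exact absurd huv'.symm hvu
              · rfl
            intro z1 hz1 z2 hz2
            rw [hwu] at hz1 hz2
            rw [hz z1 hz1, hz z2 hz2]
          · intro z1 hz1 z2 hz2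
            refine hM1 w ?_ ?_
            · rcases (hM'adj w z1).mp hz1 with h | ⟨h1, -⟩ | ⟨h1, -⟩
              · exact h
              · exact absurd h1 hwv
              · exact absurd h1 hwu
            · rcases (hM'adj w z2).mp hz2 with h | ⟨h1, -⟩ | ⟨h1, -⟩
              · exact h
              · exact absurd h1 hwv
              · exact absurd h1 hwu
        · intro w
          by_cases hwv : w = v
          · intro z1 hz1 z2 hz2
            rw [hwv] at hz1 hz2
            exfalso
            have e1 : z1 ∈ H.neighborSet v := ((SimpleGraph.sdiff_adj _ _ _ _).mp hz1).1
            rw [hHveq, Set.mem_singleton_iff] at e1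
            subst e1
            exact ((SimpleGraph.sdiff_adj _ _ _ _).mp hz1).2
              ((hM'adj v z1).mpr (Or.inr (Or.inl ⟨rfl, rfl⟩)))
          by_cases hwu : w = u
          · intro z1 hz1 z2 hz2
            rw [hwu] at hz1 hz2
            have key : ∀ z, ((H \ (M ⊔ SimpleGraph.fromEdgeSet {s(v,u)})).Adj u z) →
                ((H.deleteEdges {s(v,u)}) \ M).Adj u z := by
              intro z hz
              obtain ⟨hH, hM'⟩ := (SimpleGraph.sdiff_adj _ _ _ _).mp hz
              have hznv : z ≠ v := by
                intro hzv
                apply hM'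
                rw [hzv]
                exact (hM'adj u v).mpr (Or.inr (Or.inr ⟨rfl, rfl⟩))
              refine (SimpleGraph.sdiff_adj _ _ _ _).mpr ⟨?_, ?_⟩
              · rw [SimpleGraph.deleteEdges_adj, Set.mem_singleton_iff]
                refine ⟨hH, fun hc => ?_⟩
                rcases Sym2.eq_iff.mp hc with ⟨h1, h2⟩ | ⟨h1, h2⟩
                · exact hvu h1.symm
                · exact hznv h2
              · exact fun h => hM' ((hM'adj u z).mpr (Or.inl h))
            exact hM2 u (key z1 hz1) (key z2 hz2)
          · intro z1 hz1 z2 hz2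
            have key : ∀ z, ((H \ (M ⊔ SimpleGraph.fromEdgeSet {s(v,u)})).Adj w z) →
                ((H.deleteEdges {s(v,u)}) \ M).Adj w z := by
              intro z hz
              obtain ⟨hH, hM'⟩ := (SimpleGraph.sdiff_adj _ _ _ _).mp hz
              refine (SimpleGraph.sdiff_adj _ _ _ _).mpr
                ⟨(hsame w z hwv hwu).mp hH, fun h => hM' ((hM'adj w z).mpr (Or.inl h))⟩
            exact hM2 w (key z1 hz1) (key z2 hz2)
    · -- CASE A : all degrees 0 or 2
      push_neg at hone
      have hdeg02 : ∀ w, (H.neighborSet w).ncard = 0 ∨ (H.neighborSet w).ncard = 2 := by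
        intro w
        have h1 := hdeg w
        have h2 := hone w
        omega
      have hvu : v ≠ u := hadj.ne
      have hle : H.deleteEdges {s(v,u)} ≤ H := SimpleGraph.deleteEdges_le _
      have hnsub : ∀ w, (H.deleteEdges {s(v,u)}).neighborSet w ⊆ H.neighborSet w :=
        fun w z hz => hle hz
      have hcard' : (H.deleteEdges {s(v,u)}).edgeSet.ncard ≤ n := by
        rw [SimpleGraph.edgeSet_deleteEdges]
        have hmemE : s(v,u) ∈ H.edgeSet := hadj
        have := Set.ncard_diff_singleton_add_one hmemE (Set.toFinite _)
        omega
      have hdeg' : ∀ w, ((H.deleteEdges {s(v,u)}).neighborSet w).ncard ≤ 2 :=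
        fun w => le_trans (Set.ncard_le_ncard (hnsub w) (Set.toFinite _)) (hdeg w)
      obtain ⟨M, hMle, hM1, hM2⟩ := ih _ hcard' hdeg' (invariant_delete hadj hdeg hinv)
      have hnadj : ¬ (H.deleteEdges {s(v,u)}).Adj v u := by
        simp [SimpleGraph.deleteEdges_adj]
      have hv2 : (H.neighborSet v).ncard = 2 := by
        rcases hdeg02 v with h0 | h2
        · exfalso
          have : u ∈ H.neighborSet v := hadj
          have h := Set.ncard_eq_zero (Set.toFinite (H.neighborSet v)) |>.mp h0
          rw [h] at this
          exact this
        · exact h2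
      have hu2 : (H.neighborSet u).ncard = 2 := by
        rcases hdeg02 u with h0 | h2
        · exfalso
          have : v ∈ H.neighborSet u := hadj.symm
          have h := Set.ncard_eq_zero (Set.toFinite (H.neighborSet u)) |>.mp h0
          rw [h] at this
          exact this
        · exact h2
      have hnv1 : ((H.deleteEdges {s(v,u)}).neighborSet v).ncard = 1 := by
        rw [nbr_delete_left]
        have := Set.ncard_diff_singleton_add_one (show u ∈ H.neighborSet v from hadj)
          (Set.toFinite _)
        omega
      have hnu1 : ((H.deleteEdges {s(v,u)}).neighborSet u).ncard = 1 := by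
        rw [nbr_delete_right]
        have := Set.ncard_diff_singleton_add_one (show v ∈ H.neighborSet u from hadj.symm)
          (Set.toFinite _)
        omega
      have hreach : (H.deleteEdges {s(v,u)}).Reachable v u := by
        refine reachable_of_deg hvu ?_ hnv1 hnu1
        intro w h1 h2
        rw [nbr_delete_of_not_mem (by
          rw [Sym2.mem_iff]; rintro (rfl | rfl); exact h1 rfl; exact h2 rfl)]
        exact (hdeg02 w).symm.imp id id
      obtain ⟨q⟩ := hreach
      have hp : q.bypass.IsPath := SimpleGraph.Walk.bypass_isPath q
      set p := q.bypass with hpdef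
      have hodd : Odd p.length := length_odd_of_cycle hadj hdeg02 hinv p hp
      obtain ⟨a1, ha1⟩ := Set.ncard_eq_one.mp hnv1
      obtain ⟨b1, hb1⟩ := Set.ncard_eq_one.mp hnu1
      have hL1 : 1 ≤ p.length := by
        rcases Nat.eq_zero_or_pos p.length with h0 | h1
        · exact absurd (SimpleGraph.Walk.eq_of_length_eq_zero h0) hvu
        · exact h1
      have hg1 : p.getVert 1 = a1 := by
        have h := p.adj_getVert_succ (show 0 < p.length by omega)
        rw [Walk.getVert_zero] at h
        have : p.getVert 1 ∈ (H.deleteEdges {s(v,u)}).neighborSet v := h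
        rw [ha1, Set.mem_singleton_iff] at this
        exact this
      have eL : p.length - 1 + 1 = p.length := by omega
      have hgL : p.getVert (p.length - 1) = b1 := by
        have h := p.adj_getVert_succ (show p.length - 1 < p.length by omega)
        rw [eL, Walk.getVert_length] at h
        have : p.getVert (p.length - 1) ∈ (H.deleteEdges {s(v,u)}).neighborSet u := h.symm
        rw [hb1, Set.mem_singleton_iff] at this
        exact this
      have hpar := mat_parity hM1 hM2 p hp (p.length - 1) (by omega)
      rw [eL, Walk.getVert_length, hg1, hgL] at hpar
      have hevenL1 : Even (p.length - 1) := by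
        rcases hodd with ⟨k, hk⟩
        exact ⟨k, by omega⟩
      have hiff : M.Adj b1 u ↔ M.Adj v a1 := by
        rw [hpar]
        tauto
      have hu_ne_a1 : u ≠ a1 := by
        rintro rfl
        have : u ∈ (H.deleteEdges {s(v,u)}).neighborSet v := by rw [ha1]; rfl
        exact hnadj this
      have hv_ne_b1 : v ≠ b1 := by
        rintro rfl
        have : v ∈ (H.deleteEdges {s(v,u)}).neighborSet u := by rw [hb1]; rfl
        exact hnadj this.symm
      have ha1H : a1 ∈ H.neighborSet v := by
        apply hnsub; rw [ha1]; rfl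
      have hb1H : b1 ∈ H.neighborSet u := by
        apply hnsub; rw [hb1]; rfl
      have hnbrv : H.neighborSet v = {u, a1} := by
        symm
        apply Set.eq_of_subset_of_ncard_le
        · intro t ht
          rcases ht with rfl | ht
          · exact hadj
          · rw [Set.mem_singleton_iff] at ht; subst ht; exact ha1H
        · rw [hv2, Set.ncard_pair hu_ne_a1]
        · exact Set.toFinite _
      have hnbru : H.neighborSet u = {v, b1} := by
        symm
        apply Set.eq_of_subset_of_ncard_le
        · intro t ht
          rcases ht with rfl | ht
          · exact hadj.symm
          · rw [Set.mem_singleton_iff] at ht; subst ht; exact hb1H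
        · rw [hu2, Set.ncard_pair hv_ne_b1]
        · exact Set.toFinite _
      have hsame : ∀ w z : V, w ≠ v → w ≠ u →
          (H.Adj w z ↔ (H.deleteEdges {s(v,u)}).Adj w z) := by
        intro w z h1 h2
        rw [SimpleGraph.deleteEdges_adj, Set.mem_singleton_iff]
        constructor
        · intro h; refine ⟨h, fun hc => ?_⟩
          rcases Sym2.eq_iff.mp hc with ⟨rfl, rfl⟩ | ⟨rfl, rfl⟩
          exacts [h1 rfl, h2 rfl]
        · exact fun h => h.1
      by_cases hc : M.Adj v a1
      · have hcL : M.Adj b1 u := hiff.mpr hc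
        refine ⟨M, le_trans hMle hle, hM1, ?_⟩
        intro w
        by_cases hwv : w = v
        · have hzz : ∀ z, (H \ M).Adj v z → z = u := by
            intro z hz
            obtain ⟨hH, hM'⟩ := (SimpleGraph.sdiff_adj _ _ _ _).mp hz
            have : z ∈ H.neighborSet v := hH
            rw [hnbrv] at this
            rcases this with rfl | hz2
            · rfl
            · rw [Set.mem_singleton_iff] at hz2; subst hz2
              exact absurd hc hM'
          intro z1 hz1 z2 hz2
          rw [hwv] at hz1 hz2
          rw [hzz z1 hz1, hzz z2 hz2]
        by_cases hwu : w = u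
        · have hzz : ∀ z, (H \ M).Adj u z → z = v := by
            intro z hz
            obtain ⟨hH, hM'⟩ := (SimpleGraph.sdiff_adj _ _ _ _).mp hz
            have : z ∈ H.neighborSet u := hH
            rw [hnbru] at this
            rcases this with rfl | hz2
            · rfl
            · rw [Set.mem_singleton_iff] at hz2; subst hz2
              exact absurd hcL.symm hM'
          intro z1 hz1 z2 hz2
          rw [hwu] at hz1 hz2
          rw [hzz z1 hz1, hzz z2 hz2]
        · intro z1 hz1 z2 hz2
          refine hM2 w ?_ ?_
          · exact (SimpleGraph.sdiff_adj _ _ _ _).mpr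
              ⟨(hsame w z1 hwv hwu).mp ((SimpleGraph.sdiff_adj _ _ _ _).mp hz1).1,
               ((SimpleGraph.sdiff_adj _ _ _ _).mp hz1).2⟩
          · exact (SimpleGraph.sdiff_adj _ _ _ _).mpr
              ⟨(hsame w z2 hwv hwu).mp ((SimpleGraph.sdiff_adj _ _ _ _).mp hz2).1,
               ((SimpleGraph.sdiff_adj _ _ _ _).mp hz2).2⟩
      · have hcL : ¬ M.Adj b1 u := fun h => hc (hiff.mp h)
        have hM'adj : ∀ a b : V, (M ⊔ SimpleGraph.fromEdgeSet {s(v,u)}).Adj a b ↔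
            (M.Adj a b ∨ (a = v ∧ b = u) ∨ (a = u ∧ b = v)) := by
          intro a b
          rw [SimpleGraph.sup_adj, SimpleGraph.fromEdgeSet_adj, Set.mem_singleton_iff]
          constructor
          · rintro (h | ⟨h1, h2⟩)
            · exact Or.inl h
            · rcases Sym2.eq_iff.mp h1 with ⟨rfl, rfl⟩ | ⟨rfl, rfl⟩
              · exact Or.inr (Or.inl ⟨rfl, rfl⟩)
              · exact Or.inr (Or.inr ⟨rfl, rfl⟩)
          · rintro (h | ⟨rfl, rfl⟩ | ⟨rfl, rfl⟩)
            · exact Or.inl h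
            · exact Or.inr ⟨rfl, hvu⟩
            · exact Or.inr ⟨Sym2.eq_swap, hvu.symm⟩
        have hMnv : ∀ z, M.Adj v z → z = a1 := by
          intro z hz
          have : z ∈ (H.deleteEdges {s(v,u)}).neighborSet v := hMle hz
          rw [ha1, Set.mem_singleton_iff] at this
          exact this
        have hMnu : ∀ z, M.Adj u z → z = b1 := by
          intro z hz
          have : z ∈ (H.deleteEdges {s(v,u)}).neighborSet u := hMle hz
          rw [hb1, Set.mem_singleton_iff] at this
          exact this
        refine ⟨M ⊔ SimpleGraph.fromEdgeSet {s(v,u)}, ?_, ?_, ?_⟩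
        · refine sup_le (le_trans hMle hle) ?_
          intro a b hab
          rw [SimpleGraph.fromEdgeSet_adj, Set.mem_singleton_iff] at hab
          rcases Sym2.eq_iff.mp hab.1 with ⟨rfl, rfl⟩ | ⟨rfl, rfl⟩
          exacts [hadj, hadj.symm]
        · intro w
          by_cases hwv : w = v
          · have hzz : ∀ z, (M ⊔ SimpleGraph.fromEdgeSet {s(v,u)}).Adj v z → z = u := by
              intro z hz
              rcases (hM'adj v z).mp hz with h | ⟨-, rfl⟩ | ⟨hvu', -⟩
              · exact absurd (hMnv z h ▸ h) hc
              · rfl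
              · exact absurd hvu' hvu
            intro z1 hz1 z2 hz2
            rw [hwv] at hz1 hz2
            rw [hzz z1 hz1, hzz z2 hz2]
          by_cases hwu : w = u
          · have hzz : ∀ z, (M ⊔ SimpleGraph.fromEdgeSet {s(v,u)}).Adj u z → z = v := by
              intro z hz
              rcases (hM'adj u z).mp hz with h | ⟨huv', -⟩ | ⟨-, rfl⟩
              · exact absurd (hMnu z h ▸ h).symm hcL
              · exact absurd huv'.symm hvu
              · rfl
            intro z1 hz1 z2 hz2
            rw [hwu] at hz1 hz2
            rw [hzz z1 hz1, hzz z2 hz2]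
          · intro z1 hz1 z2 hz2
            refine hM1 w ?_ ?_
            · rcases (hM'adj w z1).mp hz1 with h | ⟨h1, -⟩ | ⟨h1, -⟩
              · exact h
              · exact absurd h1 hwv
              · exact absurd h1 hwu
            · rcases (hM'adj w z2).mp hz2 with h | ⟨h1, -⟩ | ⟨h1, -⟩
              · exact h
              · exact absurd h1 hwv
              · exact absurd h1 hwu
        · intro w
          by_cases hwv : w = v
          · have hzz : ∀ z, (H \ (M ⊔ SimpleGraph.fromEdgeSet {s(v,u)})).Adj v z → z = a1 := by
              intro z hz
              obtain ⟨hH, hM'⟩ := (SimpleGraph.sdiff_adj _ _ _ _).mp hz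
              have : z ∈ H.neighborSet v := hH
              rw [hnbrv] at this
              rcases this with rfl | hz2
              · exact absurd ((hM'adj v z).mpr (Or.inr (Or.inl ⟨rfl, rfl⟩))) hM'
              · rw [Set.mem_singleton_iff] at hz2; exact hz2
            intro z1 hz1 z2 hz2
            rw [hwv] at hz1 hz2
            rw [hzz z1 hz1, hzz z2 hz2]
          by_cases hwu : w = u
          · have hzz : ∀ z, (H \ (M ⊔ SimpleGraph.fromEdgeSet {s(v,u)})).Adj u z → z = b1 := by
              intro z hz
              obtain ⟨hH, hM'⟩ := (SimpleGraph.sdiff_adj _ _ _ _).mp hz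
              have : z ∈ H.neighborSet u := hH
              rw [hnbru] at this
              rcases this with rfl | hz2
              · exact absurd ((hM'adj u z).mpr (Or.inr (Or.inr ⟨rfl, rfl⟩))) hM'
              · rw [Set.mem_singleton_iff] at hz2; exact hz2
            intro z1 hz1 z2 hz2
            rw [hwu] at hz1 hz2
            rw [hzz z1 hz1, hzz z2 hz2]
          · intro z1 hz1 z2 hz2
            have key : ∀ z, ((H \ (M ⊔ SimpleGraph.fromEdgeSet {s(v,u)})).Adj w z) →
                ((H.deleteEdges {s(v,u)}) \ M).Adj w z := by
              intro z hz
              obtain ⟨hH, hM'⟩ := (SimpleGraph.sdiff_adj _ _ _ _).mp hz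
              refine (SimpleGraph.sdiff_adj _ _ _ _).mpr
                ⟨(hsame w z hwv hwu).mp hH, fun h => hM' ((hM'adj w z).mpr (Or.inl h))⟩
            exact hM2 w (key z1 hz1) (key z2 hz2)


lemma mat_two_le_edist {G M : SimpleGraph V} (hmat : Mat M)
    {e f : G.edgeSet} (hne : e ≠ f) (he : (e : Sym2 V) ∈ M.edgeSet)
    (hf : (f : Sym2 V) ∈ M.edgeSet) : 2 ≤ G.lineGraph.edist e f := by
  refine two_le_edist hne ?_
  intro hadj
  obtain ⟨hne', t, hte, htf⟩ := SimpleGraph.lineGraph_adj_iff_exists.mp hadj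
  obtain ⟨z1, hz1, he1⟩ := exists_adj_of_mem_edge he hte
  obtain ⟨z2, hz2, hf1⟩ := exists_adj_of_mem_edge hf htf
  have hz12 : z1 = z2 := hmat t hz1 hz2
  exact hne (Subtype.ext (by rw [he1, hf1, hz12]))

lemma main_aux {V : Type*} [Fintype V] (G : SimpleGraph V) (hcubic : IsCubicGraph G)
    (F : G.Subgraph) (hF : IsTwoFactor F)
    (C1 C2 : F.spanningCoe.ConnectedComponent) (hne : C1 ≠ C2)
    (hodd : oddCycles F = {C1, C2})
    (h5 : 5 ≤ C1.supp.ncard)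
    (x y : V) (hxy : F.Adj x y) (hx : x ∈ C2.supp)
    (hax : ∀ w, G.Adj x w → w ∉ C1.supp) (hay : ∀ w, G.Adj y w → w ∉ C1.supp) :
    HasPackingEdgeColoring G [1, 1, 1, 3] := by
  classical
  have hFSle : F.spanningCoe ≤ G := F.spanningCoe_le
  have hFSnbr : ∀ v : V, F.spanningCoe.neighborSet v = F.neighborSet v := by
    intro v; ext z
    simp [SimpleGraph.Subgraph.spanningCoe_adj, SimpleGraph.Subgraph.mem_neighborSet]
  have hdeg2 : ∀ v : V, (F.spanningCoe.neighborSet v).ncard = 2 := by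
    intro v; rw [hFSnbr]; exact hF.2 v
  have hxyFS : F.spanningCoe.Adj x y := by simpa using hxy
  have hnbrsub : ∀ v : V, F.spanningCoe.neighborSet v ⊆ G.neighborSet v := fun v z hz => hFSle hz
  have hdisj : ∀ z : V, z ∈ C1.supp → z ∈ C2.supp → False := by
    intro z h1 h2
    rw [ConnectedComponent.mem_supp_iff] at h1 h2
    exact hne (h1.symm.trans h2)
  have hy : y ∈ C2.supp := mem_supp_of_adj hx hxyFS
  have hxC1 : x ∉ C1.supp := fun h => hdisj x h hx
  have hyC1 : y ∉ C1.supp := fun h => hdisj y h hy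
  have havoid : ∀ z t : V, z ∉ C1.supp → F.spanningCoe.Adj z t → t ∉ C1.supp :=
    fun z t hz ha ht => hz (mem_supp_of_adj ht ha.symm)
  have hmate : ∀ v : V, ∃ m, (G.Adj v m ∧ ¬ F.spanningCoe.Adj v m) ∧
      ∀ z, G.Adj v z → ¬ F.spanningCoe.Adj v z → z = m := by
    intro v
    have hsub := hnbrsub v
    have hdiff : (G.neighborSet v \ F.spanningCoe.neighborSet v).ncard = 1 := by
      rw [Set.ncard_diff hsub (Set.toFinite _), hcubic v, hdeg2 v]
    obtain ⟨m, hm⟩ := Set.ncard_eq_one.mp hdiff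
    refine ⟨m, ?_, ?_⟩
    · have hmm : m ∈ G.neighborSet v \ F.spanningCoe.neighborSet v := by rw [hm]; rfl
      exact ⟨hmm.1, hmm.2⟩
    · intro z h1 h2
      have hmm : z ∈ G.neighborSet v \ F.spanningCoe.neighborSet v := ⟨h1, h2⟩
      rw [hm] at hmm; exact hmm
  have hother : ∀ v w : V, F.spanningCoe.Adj v w → ∃ w2, w2 ≠ w ∧ F.spanningCoe.Adj v w2 ∧
      ∀ z, F.spanningCoe.Adj v z → z = w ∨ z = w2 := by
    intro v w hvw
    have h2 := hdeg2 v
    obtain ⟨w2, hw2mem, hw2ne⟩ := Set.exists_ne_of_one_lt_ncard (s := F.spanningCoe.neighborSet v) (by omega) w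
    refine ⟨w2, hw2ne, hw2mem, ?_⟩
    intro z hz
    have hpair : ({w, w2} : Set V) ⊆ F.spanningCoe.neighborSet v := by
      intro t ht; rcases ht with rfl | ht
      · exact hvw
      · rw [Set.mem_singleton_iff] at ht; subst ht; exact hw2mem
    have heq := Set.eq_of_subset_of_ncard_le hpair
      (by simp [h2, Set.ncard_pair (Ne.symm hw2ne)]) (Set.toFinite _)
    have hzz : z ∈ ({w, w2} : Set V) := by rw [heq]; exact hz
    rcases hzz with rfl | hzz
    · exact Or.inl rfl
    · rw [Set.mem_singleton_iff] at hzz; exact Or.inr hzz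
  obtain ⟨x2, hx2ne, hx2adj, hx2all⟩ := hother x y hxyFS
  obtain ⟨y2, hy2ne, hy2adj, hy2all⟩ := hother y x hxyFS.symm
  have hx2C2 : x2 ∈ C2.supp := mem_supp_of_adj hx hx2adj
  have hy2C2 : y2 ∈ C2.supp := mem_supp_of_adj hy hy2adj
  have hx2C1 : x2 ∉ C1.supp := fun h => hdisj x2 h hx2C2
  have hy2C1 : y2 ∉ C1.supp := fun h => hdisj y2 h hy2C2
  have huniqC1 : ∀ z : V, z ∉ C1.supp → ∀ t1 t2, t1 ∈ C1.supp → t2 ∈ C1.supp →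
      G.Adj z t1 → G.Adj z t2 → t1 = t2 := by
    intro z hz t1 t2 h1 h2 a1 a2
    obtain ⟨m, hm1, hm2⟩ := hmate z
    have e1 : t1 = m := hm2 t1 a1 (fun hFa => (havoid z t1 hz hFa) h1)
    have e2 : t2 = m := hm2 t2 a2 (fun hFa => (havoid z t2 hz hFa) h2)
    rw [e1, e2]
  have hxa : ∃ a, ∀ t, t ∈ C1.supp → G.Adj x2 t → t = a := by
    by_cases hex : ∃ t, t ∈ C1.supp ∧ G.Adj x2 t
    · obtain ⟨t0, ht0, ha0⟩ := hex
      exact ⟨t0, fun t ht hat => huniqC1 x2 hx2C1 t t0 ht ht0 hat ha0⟩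
    · push_neg at hex
      exact ⟨x, fun t ht hat => absurd hat (hex t ht)⟩
  have hyb : ∃ b, ∀ t, t ∈ C1.supp → G.Adj y2 t → t = b := by
    by_cases hex : ∃ t, t ∈ C1.supp ∧ G.Adj y2 t
    · obtain ⟨t0, ht0, ha0⟩ := hex
      exact ⟨t0, fun t ht hat => huniqC1 y2 hy2C1 t t0 ht ht0 hat ha0⟩
    · push_neg at hex
      exact ⟨x, fun t ht hat => absurd hat (hex t ht)⟩
  obtain ⟨a, ha⟩ := hxa
  obtain ⟨b, hb⟩ := hyb
  have hcard3 : 3 ≤ (C1.supp \ {a, b}).ncard := by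
    have h1 := Set.ncard_le_ncard_diff_add_ncard C1.supp ({a, b} : Set V) (Set.toFinite _)
    have h2 : ({a, b} : Set V).ncard ≤ 2 := by
      apply le_trans (Set.ncard_insert_le _ _)
      simp
    omega
  obtain ⟨w1, hw1⟩ := Set.nonempty_of_ncard_ne_zero
    (s := C1.supp \ {a, b}) (by omega)
  obtain ⟨w2, hw2, hw2ne⟩ := Set.exists_ne_of_one_lt_ncard
    (s := C1.supp \ {a, b}) (by omega) w1
  have hcard1 : 1 ≤ ((C1.supp \ {a, b}) \ {w1, w2}).ncard := by
    have h1 := Set.ncard_le_ncard_diff_add_ncard (C1.supp \ {a, b}) ({w1, w2} : Set V)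
      (Set.toFinite _)
    have h2 : ({w1, w2} : Set V).ncard ≤ 2 := by
      apply le_trans (Set.ncard_insert_le _ _)
      simp
    omega
  obtain ⟨w3, hw3⟩ := Set.nonempty_of_ncard_ne_zero
    (s := (C1.supp \ {a, b}) \ {w1, w2}) (by omega)
  have hw3mem : w3 ∈ C1.supp \ {a, b} := hw3.1
  have hw3ne1 : w3 ≠ w1 := fun h => hw3.2 (by rw [h]; exact Set.mem_insert _ _)
  have hw3ne2 : w3 ≠ w2 := fun h => hw3.2 (by rw [h]; exact Set.mem_insert_of_mem _ rfl)
  have hgood : ∀ t, t ∈ C1.supp → t ≠ a → t ≠ b → ¬ G.Adj x2 t ∧ ¬ G.Adj y2 t := by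
    intro t ht hta htb
    exact ⟨fun hadj => hta (ha t ht hadj), fun hadj => htb (hb t ht hadj)⟩
  have hnotab : ∀ w : V, w ∈ C1.supp \ {a, b} → w ≠ a ∧ w ≠ b := by
    intro w hw
    constructor
    · intro h; exact hw.2 (by rw [h]; exact Set.mem_insert _ _)
    · intro h; exact hw.2 (by rw [h]; exact Set.mem_insert_of_mem _ rfl)
  have hedge1 : ∃ u1 u2 : V, F.spanningCoe.Adj u1 u2 ∧ u1 ∈ C1.supp ∧ u2 ∈ C1.supp ∧
      (¬ G.Adj x2 u1) ∧ (¬ G.Adj y2 u1) ∧ (¬ G.Adj x2 u2) ∧ (¬ G.Adj y2 u2) := by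
    have hwi : ∀ w, w ∈ C1.supp \ {a, b} →
        (∃ t, F.spanningCoe.Adj w t ∧ t ≠ a ∧ t ≠ b) →
        ∃ u1 u2 : V, F.spanningCoe.Adj u1 u2 ∧ u1 ∈ C1.supp ∧ u2 ∈ C1.supp ∧
          (¬ G.Adj x2 u1) ∧ (¬ G.Adj y2 u1) ∧ (¬ G.Adj x2 u2) ∧ (¬ G.Adj y2 u2) := by
      rintro w hw ⟨t, hadj, hta, htb⟩
      have hwC1 : w ∈ C1.supp := hw.1
      have htC1 : t ∈ C1.supp := mem_supp_of_adj hwC1 hadj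
      obtain ⟨hwa, hwb⟩ := hnotab w hw
      obtain ⟨hg1, hg2⟩ := hgood w hwC1 hwa hwb
      obtain ⟨hg3, hg4⟩ := hgood t htC1 hta htb
      exact ⟨w, t, hadj, hwC1, htC1, hg1, hg2, hg3, hg4⟩
    by_cases hc1 : ∃ t, F.spanningCoe.Adj w1 t ∧ t ≠ a ∧ t ≠ b
    · exact hwi w1 hw1 hc1
    by_cases hc2 : ∃ t, F.spanningCoe.Adj w2 t ∧ t ≠ a ∧ t ≠ b
    · exact hwi w2 hw2 hc2
    by_cases hc3 : ∃ t, F.spanningCoe.Adj w3 t ∧ t ≠ a ∧ t ≠ b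
    · exact hwi w3 hw3mem hc3
    exfalso
    push_neg at hc1 hc2 hc3
    have hkey : ∀ w : V, (∀ t, F.spanningCoe.Adj w t → t ≠ a → t = b) →
        F.spanningCoe.Adj w a := by
      intro w hall
      have h2 := hdeg2 w
      obtain ⟨t1, ht1⟩ := Set.nonempty_of_ncard_ne_zero
        (s := F.spanningCoe.neighborSet w) (by omega)
      obtain ⟨t2, ht2, ht2ne⟩ := Set.exists_ne_of_one_lt_ncard
        (s := F.spanningCoe.neighborSet w) (by omega) t1
      by_cases h1a : t1 = a
      · rw [← h1a]; exact ht1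
      · have hb1 : t1 = b := hall t1 ht1 h1a
        by_cases h2a : t2 = a
        · rw [← h2a]; exact ht2
        · have hb2 : t2 = b := hall t2 ht2 h2a
          exact absurd (hb1.trans hb2.symm).symm ht2ne
    have ha1 := hkey w1 hc1
    have ha2 := hkey w2 hc2
    have ha3 := hkey w3 hc3
    have h3 := three_le_ncard
      (show w1 ∈ F.spanningCoe.neighborSet a from ha1.symm)
      (show w2 ∈ F.spanningCoe.neighborSet a from ha2.symm)
      (show w3 ∈ F.spanningCoe.neighborSet a from ha3.symm)
      (Ne.symm hw2ne) (Ne.symm hw3ne1) (Ne.symm hw3ne2)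
    have := hdeg2 a
    omega
  obtain ⟨u1, u2, he1adj, hu1C1, hu2C1, hu1x2, hu1y2, hu2x2, hu2y2⟩ := hedge1
  have he1G : s(u1, u2) ∈ G.edgeSet := hFSle he1adj
  have he2G : s(x, y) ∈ G.edgeSet := hxy.adj_sub
  have hmem2 : ∀ (p q t : V), t ∈ (s(p,q) : Sym2 V) → t = p ∨ t = q :=
    fun p q t ht => Sym2.mem_iff.mp ht
  have hblock : ∀ t1 z s', (t1 = x ∨ t1 = y) → G.Adj t1 z → G.Adj z s' →
      s' ∈ C1.supp → (G.Adj x2 s' ∨ G.Adj y2 s') := by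
    intro t1 z s' ht1 hz hs hC1
    by_cases hfs : F.spanningCoe.Adj t1 z
    · rcases ht1 with rfl | rfl
      · rcases hx2all z hfs with rfl | rfl
        · exact absurd hC1 (hay s' hs)
        · exact Or.inl hs
      · rcases hy2all z hfs with rfl | rfl
        · exact absurd hC1 (hax s' hs)
        · exact Or.inr hs
    · exfalso
      obtain ⟨m, ⟨hm1, hm2⟩, hm3⟩ := hmate t1
      have hzm : z = m := hm3 z hz hfs
      subst hzm
      have hmnot : z ∉ C1.supp := by
        rcases ht1 with rfl | rfl
        · exact hax z hm1
        · exact hay z hm1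
      by_cases hfs2 : F.spanningCoe.Adj z s'
      · exact (havoid z s' hmnot hfs2) hC1
      · obtain ⟨m2, ⟨hm21, hm22⟩, hm23⟩ := hmate z
        have ht1m : t1 = m2 := hm23 t1 hm1.symm (fun h => hm2 h.symm)
        have hs'm : s' = m2 := hm23 s' hs hfs2
        rw [← ht1m] at hs'm
        rw [hs'm] at hC1
        rcases ht1 with rfl | rfl
        · exact hxC1 hC1
        · exact hyC1 hC1
  have h0ne : (⟨s(x,y), he2G⟩ : G.edgeSet) ≠ ⟨s(u1,u2), he1G⟩ := by
    intro h
    have hval : (s(x,y) : Sym2 V) = s(u1,u2) := congrArg Subtype.val h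
    have hxmem : x ∈ (s(u1,u2) : Sym2 V) := by rw [← hval]; exact Sym2.mem_mk_left x y
    rcases hmem2 _ _ _ hxmem with h' | h'
    · exact hxC1 (h' ▸ hu1C1)
    · exact hxC1 (h' ▸ hu2C1)
  have ht3goods : ∀ t3 : V, t3 ∈ (s(u1,u2) : Sym2 V) →
      t3 ∈ C1.supp ∧ ¬ G.Adj x2 t3 ∧ ¬ G.Adj y2 t3 := by
    intro t3 ht3
    rcases hmem2 _ _ _ ht3 with rfl | rfl
    · exact ⟨hu1C1, hu1x2, hu1y2⟩
    · exact ⟨hu2C1, hu2x2, hu2y2⟩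
  have hdist : 4 ≤ G.lineGraph.edist ⟨s(x,y), he2G⟩ ⟨s(u1,u2), he1G⟩ := by
    apply four_le_edist h0ne
    · intro hadj
      obtain ⟨hne', t, hte2, hte1⟩ := SimpleGraph.lineGraph_adj_iff_exists.mp hadj
      have htC1 := (ht3goods t hte1).1
      rcases hmem2 x y t hte2 with rfl | rfl
      · exact hxC1 htC1
      · exact hyC1 htC1
    · intro g hadj1 hadj2
      obtain ⟨hne1, t1, ht1e2, ht1g⟩ := SimpleGraph.lineGraph_adj_iff_exists.mp hadj1
      obtain ⟨hne2, t2, ht2g, ht2e1⟩ := SimpleGraph.lineGraph_adj_iff_exists.mp hadj2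
      have ht2C1 := (ht3goods t2 ht2e1).1
      obtain ⟨z, hzadj, hzeq⟩ := exists_adj_of_mem_edge g.2 ht1g
      rw [hzeq] at ht2g
      rcases hmem2 t1 z t2 ht2g with h2' | h2'
      · rcases hmem2 x y t1 ht1e2 with h1 | h1
        · exact hxC1 (by rw [← h1, ← h2']; exact ht2C1)
        · exact hyC1 (by rw [← h1, ← h2']; exact ht2C1)
      · have hzC1 : z ∈ C1.supp := by rw [← h2']; exact ht2C1
        rcases hmem2 x y t1 ht1e2 with h1 | h1
        · exact hax z (h1 ▸ hzadj) hzC1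
        · exact hay z (h1 ▸ hzadj) hzC1
    · intro g h' hadj1 hadj2 hadj3
      obtain ⟨hne1, t1, ht1e2, ht1g⟩ := SimpleGraph.lineGraph_adj_iff_exists.mp hadj1
      obtain ⟨hne2, t2, ht2g, ht2h⟩ := SimpleGraph.lineGraph_adj_iff_exists.mp hadj2
      obtain ⟨hne3, t3, ht3h, ht3e1⟩ := SimpleGraph.lineGraph_adj_iff_exists.mp hadj3
      have ht1xy : t1 = x ∨ t1 = y := hmem2 x y t1 ht1e2
      obtain ⟨ht3C1, ht3x2, ht3y2⟩ := ht3goods t3 ht3e1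
      obtain ⟨z, hzadj, hzeq⟩ := exists_adj_of_mem_edge g.2 ht1g
      obtain ⟨s', hsadj, hseq⟩ := exists_adj_of_mem_edge h'.2 ht2h
      rw [hzeq] at ht2g
      rw [hseq] at ht3h
      rcases hmem2 t2 s' t3 ht3h with h3 | h3
      · rcases hmem2 t1 z t2 ht2g with h2' | h2'
        · rcases ht1xy with h1 | h1
          · exact hxC1 (by rw [← h1, ← h2', ← h3]; exact ht3C1)
          · exact hyC1 (by rw [← h1, ← h2', ← h3]; exact ht3C1)
        · have hzC1 : z ∈ C1.supp := by rw [← h2', ← h3]; exact ht3C1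
          rcases ht1xy with h1 | h1
          · exact hax z (h1 ▸ hzadj) hzC1
          · exact hay z (h1 ▸ hzadj) hzC1
      · have hs'C1 : s' ∈ C1.supp := by rw [← h3]; exact ht3C1
        rcases hmem2 t1 z t2 ht2g with h2' | h2'
        · rcases ht1xy with h1 | h1
          · refine hax s' ?_ hs'C1
            rw [← h1, ← h2']; exact hsadj
          · refine hay s' ?_ hs'C1
            rw [← h1, ← h2']; exact hsadj
        · have hzs : G.Adj z s' := by rw [← h2']; exact hsadj
          rcases hblock t1 z s' ht1xy hzadj hzs hs'C1 with h | h
          · exact ht3x2 (h3 ▸ h)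
          · exact ht3y2 (h3 ▸ h)
  -- the graph H: F minus the two chosen edges
  have hHle : F.spanningCoe.deleteEdges {s(u1,u2), s(x,y)} ≤ F.spanningCoe :=
    SimpleGraph.deleteEdges_le _
  have hHnbrsub : ∀ v, (F.spanningCoe.deleteEdges {s(u1,u2), s(x,y)}).neighborSet v ⊆
      F.spanningCoe.neighborSet v := fun v z hz => hHle hz
  have hHdeg : ∀ v, ((F.spanningCoe.deleteEdges {s(u1,u2), s(x,y)}).neighborSet v).ncard ≤ 2 :=
    fun v => le_trans (Set.ncard_le_ncard (hHnbrsub v) (Set.toFinite _)) (le_of_eq (hdeg2 v))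
  have hHadj : ∀ a b' : V, (F.spanningCoe.deleteEdges {s(u1,u2), s(x,y)}).Adj a b' ↔
      (F.spanningCoe.Adj a b' ∧ s(a,b') ≠ s(u1,u2) ∧ s(a,b') ≠ s(x,y)) := by
    intro a b'
    rw [SimpleGraph.deleteEdges_adj]
    simp [not_or]
  have hendpt : ∀ t t' : V, F.spanningCoe.Adj t t' →
      (s(t,t') = s(u1,u2) ∨ s(t,t') = s(x,y)) →
      ((F.spanningCoe.deleteEdges {s(u1,u2), s(x,y)}).neighborSet t).ncard ≤ 1 := by
    intro t t' hadj hmem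
    have hsub2 : (F.spanningCoe.deleteEdges {s(u1,u2), s(x,y)}).neighborSet t ⊆
        F.spanningCoe.neighborSet t \ {t'} := by
      intro z hz
      refine ⟨hHle hz, ?_⟩
      rw [Set.mem_singleton_iff]
      rintro rfl
      have := ((hHadj t z).mp hz).2
      rcases hmem with hm | hm
      · exact this.1 hm
      · exact this.2 hm
    have h1 := Set.ncard_diff_singleton_add_one
      (show t' ∈ F.spanningCoe.neighborSet t from hadj) (Set.toFinite _)
    have h2 := Set.ncard_le_ncard hsub2 (Set.toFinite _)
    have h3 := hdeg2 t
    omega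
  have hHinv : ∀ w : V, (∀ z ∈
        ((F.spanningCoe.deleteEdges {s(u1,u2), s(x,y)}).connectedComponentMk w).supp,
        ((F.spanningCoe.deleteEdges {s(u1,u2), s(x,y)}).neighborSet z).ncard = 2) →
      Even ((F.spanningCoe.deleteEdges {s(u1,u2), s(x,y)}).connectedComponentMk w).supp.ncard := by
    intro w hreg
    have hnot : ∀ t ∈ ((F.spanningCoe.deleteEdges {s(u1,u2), s(x,y)}).connectedComponentMk w).supp,
        t ≠ u1 ∧ t ≠ u2 ∧ t ≠ x ∧ t ≠ y := by
      intro t ht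
      have h2 := hreg t ht
      refine ⟨?_, ?_, ?_, ?_⟩
      · rintro rfl; have := hendpt t u2 he1adj (Or.inl rfl); omega
      · rintro rfl; have := hendpt t u1 he1adj.symm (Or.inl (Sym2.eq_swap)); omega
      · rintro rfl; have := hendpt t y hxyFS (Or.inr rfl); omega
      · rintro rfl; have := hendpt t x hxyFS.symm (Or.inr (Sym2.eq_swap)); omega
    have hclosed : ∀ z ∈
        ((F.spanningCoe.deleteEdges {s(u1,u2), s(x,y)}).connectedComponentMk w).supp,
        ∀ t, F.spanningCoe.Adj z t →
          (F.spanningCoe.deleteEdges {s(u1,u2), s(x,y)}).Adj z t := by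
      intro z hz t hadj
      obtain ⟨hz1, hz2, hz3, hz4⟩ := hnot z hz
      rw [hHadj]
      refine ⟨hadj, ?_, ?_⟩
      · intro hc
        rcases Sym2.eq_iff.mp hc with ⟨h1, -⟩ | ⟨h1, -⟩
        · exact hz1 h1
        · exact hz2 h1
      · intro hc
        rcases Sym2.eq_iff.mp hc with ⟨h1, -⟩ | ⟨h1, -⟩
        · exact hz3 h1
        · exact hz4 h1
    have heq := comp_transfer hHle hclosed
    by_contra hoddn
    have hOdd : Odd
        ((F.spanningCoe.deleteEdges {s(u1,u2), s(x,y)}).connectedComponentMk w).supp.ncard :=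
      Nat.not_even_iff_odd.mp hoddn
    have hcmem : (F.spanningCoe.connectedComponentMk w) ∈ oddCycles F := by
      show Odd (F.spanningCoe.connectedComponentMk w).supp.ncard
      rw [heq]; exact hOdd
    rw [hodd] at hcmem
    rcases hcmem with hc | hc
    · have hm : u1 ∈ (F.spanningCoe.connectedComponentMk w).supp := by rw [hc]; exact hu1C1
      rw [heq] at hm
      exact (hnot u1 hm).1 rfl
    · rw [Set.mem_singleton_iff] at hc
      have hm : x ∈ (F.spanningCoe.connectedComponentMk w).supp := by rw [hc]; exact hx
      rw [heq] at hm
      exact (hnot x hm).2.2.1 rfl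
  obtain ⟨M1, hM1le, hM1mat, hM2mat⟩ := two_matchings
    ((F.spanningCoe.deleteEdges {s(u1,u2), s(x,y)}).edgeSet.ncard)
    (F.spanningCoe.deleteEdges {s(u1,u2), s(x,y)}) le_rfl hHdeg hHinv
  have hM3mat : Mat (G \ F.spanningCoe) := by
    intro v
    have hset : (G \ F.spanningCoe).neighborSet v =
        G.neighborSet v \ F.spanningCoe.neighborSet v := by
      ext z
      simp only [mem_neighborSet, Set.mem_diff]
      exact ⟨fun h => ⟨((SimpleGraph.sdiff_adj _ _ _ _).mp h).1,
          ((SimpleGraph.sdiff_adj _ _ _ _).mp h).2⟩,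
        fun ⟨h1, h2⟩ => (SimpleGraph.sdiff_adj _ _ _ _).mpr ⟨h1, h2⟩⟩
    have hn1 : ((G \ F.spanningCoe).neighborSet v).ncard = 1 := by
      rw [hset, Set.ncard_diff (hnbrsub v) (Set.toFinite _), hcubic v, hdeg2 v]
    obtain ⟨m, hm⟩ := Set.ncard_eq_one.mp hn1
    rw [hm]
    exact Set.subsingleton_singleton
  -- the coloring
  have hlen4 : [1,1,1,3].length = 4 := rfl
  have hcolv : ∀ g : G.edgeSet,
      (if ((g : Sym2 V) = s(u1,u2) ∨ (g : Sym2 V) = s(x,y)) then (3:ℕ)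
       else if (g : Sym2 V) ∈ M1.edgeSet then 0
       else if (g : Sym2 V) ∈ ((F.spanningCoe.deleteEdges {s(u1,u2), s(x,y)}) \ M1).edgeSet
       then 1 else 2) < [1,1,1,3].length := by
    intro g
    split_ifs <;> decide
  refine ⟨fun g => ⟨_, hcolv g⟩, ?_⟩
  intro e f hnef hcef
  have hvalne : (e : Sym2 V) ≠ (f : Sym2 V) := fun h => hnef (Subtype.ext h)
  have hceq :
      (if ((e : Sym2 V) = s(u1,u2) ∨ (e : Sym2 V) = s(x,y)) then (3:ℕ)
       else if (e : Sym2 V) ∈ M1.edgeSet then 0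
       else if (e : Sym2 V) ∈ ((F.spanningCoe.deleteEdges {s(u1,u2), s(x,y)}) \ M1).edgeSet
       then 1 else 2) =
      (if ((f : Sym2 V) = s(u1,u2) ∨ (f : Sym2 V) = s(x,y)) then (3:ℕ)
       else if (f : Sym2 V) ∈ M1.edgeSet then 0
       else if (f : Sym2 V) ∈ ((F.spanningCoe.deleteEdges {s(u1,u2), s(x,y)}) \ M1).edgeSet
       then 1 else 2) := congrArg Fin.val hcef
  -- classification of colors
  have hclass : ∀ g : G.edgeSet,
      ((if ((g : Sym2 V) = s(u1,u2) ∨ (g : Sym2 V) = s(x,y)) then (3:ℕ)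
       else if (g : Sym2 V) ∈ M1.edgeSet then 0
       else if (g : Sym2 V) ∈ ((F.spanningCoe.deleteEdges {s(u1,u2), s(x,y)}) \ M1).edgeSet
       then 1 else 2) = 3 ∧ ((g : Sym2 V) = s(u1,u2) ∨ (g : Sym2 V) = s(x,y))) ∨
      ((if ((g : Sym2 V) = s(u1,u2) ∨ (g : Sym2 V) = s(x,y)) then (3:ℕ)
       else if (g : Sym2 V) ∈ M1.edgeSet then 0
       else if (g : Sym2 V) ∈ ((F.spanningCoe.deleteEdges {s(u1,u2), s(x,y)}) \ M1).edgeSet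
       then 1 else 2) = 0 ∧ (g : Sym2 V) ∈ M1.edgeSet) ∨
      ((if ((g : Sym2 V) = s(u1,u2) ∨ (g : Sym2 V) = s(x,y)) then (3:ℕ)
       else if (g : Sym2 V) ∈ M1.edgeSet then 0
       else if (g : Sym2 V) ∈ ((F.spanningCoe.deleteEdges {s(u1,u2), s(x,y)}) \ M1).edgeSet
       then 1 else 2) = 1 ∧
        (g : Sym2 V) ∈ ((F.spanningCoe.deleteEdges {s(u1,u2), s(x,y)}) \ M1).edgeSet) ∨
      ((if ((g : Sym2 V) = s(u1,u2) ∨ (g : Sym2 V) = s(x,y)) then (3:ℕ)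
       else if (g : Sym2 V) ∈ M1.edgeSet then 0
       else if (g : Sym2 V) ∈ ((F.spanningCoe.deleteEdges {s(u1,u2), s(x,y)}) \ M1).edgeSet
       then 1 else 2) = 2 ∧ (g : Sym2 V) ∈ (G \ F.spanningCoe).edgeSet) := by
    intro g
    by_cases h1 : ((g : Sym2 V) = s(u1,u2) ∨ (g : Sym2 V) = s(x,y))
    · exact Or.inl ⟨if_pos h1, h1⟩
    · by_cases h2 : (g : Sym2 V) ∈ M1.edgeSet
      · refine Or.inr (Or.inl ⟨?_, h2⟩)
        rw [if_neg h1, if_pos h2]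
      · by_cases h3 : (g : Sym2 V) ∈
            ((F.spanningCoe.deleteEdges {s(u1,u2), s(x,y)}) \ M1).edgeSet
        · refine Or.inr (Or.inr (Or.inl ⟨?_, h3⟩))
          rw [if_neg h1, if_neg h2, if_pos h3]
        · refine Or.inr (Or.inr (Or.inr ⟨?_, ?_⟩))
          · rw [if_neg h1, if_neg h2, if_neg h3]
          · rw [SimpleGraph.edgeSet_sdiff]
            refine ⟨g.2, ?_⟩
            intro hFSg
            obtain ⟨h1a, h1b⟩ := not_or.mp h1
            have hH : (g : Sym2 V) ∈
                (F.spanningCoe.deleteEdges {s(u1,u2), s(x,y)}).edgeSet := by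
              rw [SimpleGraph.edgeSet_deleteEdges]
              refine ⟨hFSg, ?_⟩
              intro hmem
              rcases hmem with hm | hm
              · exact h1a hm
              · exact h1b hm
            apply h3
            rw [SimpleGraph.edgeSet_sdiff]
            exact ⟨hH, h2⟩
  -- list.get values
  have hget0 : ([1,1,1,3].get (⟨0, by decide⟩ : Fin ([1,1,1,3].length)) : ℕ) = 1 := rfl
  have hget1 : ([1,1,1,3].get (⟨1, by decide⟩ : Fin ([1,1,1,3].length)) : ℕ) = 1 := rfl
  have hget2 : ([1,1,1,3].get (⟨2, by decide⟩ : Fin ([1,1,1,3].length)) : ℕ) = 1 := rfl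
  have hget3 : ([1,1,1,3].get (⟨3, by decide⟩ : Fin ([1,1,1,3].length)) : ℕ) = 3 := rfl
  have hfin : ∀ (k : ℕ) (hk : k < [1,1,1,3].length)
      (hke : (if ((e : Sym2 V) = s(u1,u2) ∨ (e : Sym2 V) = s(x,y)) then (3:ℕ)
       else if (e : Sym2 V) ∈ M1.edgeSet then 0
       else if (e : Sym2 V) ∈ ((F.spanningCoe.deleteEdges {s(u1,u2), s(x,y)}) \ M1).edgeSet
       then 1 else 2) = k),
      (⟨(if ((e : Sym2 V) = s(u1,u2) ∨ (e : Sym2 V) = s(x,y)) then (3:ℕ)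
       else if (e : Sym2 V) ∈ M1.edgeSet then 0
       else if (e : Sym2 V) ∈ ((F.spanningCoe.deleteEdges {s(u1,u2), s(x,y)}) \ M1).edgeSet
       then 1 else 2), hcolv e⟩ : Fin ([1,1,1,3].length)) = ⟨k, hk⟩ :=
    fun k hk hke => Fin.ext hke
  rcases hclass e with ⟨he', hem⟩ | ⟨he', hem⟩ | ⟨he', hem⟩ | ⟨he', hem⟩ <;>
    rcases hclass f with ⟨hf', hfm⟩ | ⟨hf', hfm⟩ | ⟨hf', hfm⟩ | ⟨hf', hfm⟩
  · -- 3,3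
    show (([1,1,1,3].get ⟨_, hcolv e⟩ : ℕ) : ℕ∞) + 1 ≤ G.lineGraph.edist e f
    rw [hfin 3 (by decide) he', hget3]
    have hfour : ((3:ℕ) : ℕ∞) + 1 = 4 := by norm_num
    rw [hfour]
    rcases hem with he'' | he'' <;> rcases hfm with hf'' | hf''
    · exact absurd (he''.trans hf''.symm) hvalne
    · have heq1 : e = ⟨s(u1,u2), he1G⟩ := Subtype.ext he''
      have heq2 : f = ⟨s(x,y), he2G⟩ := Subtype.ext hf''
      rw [heq1, heq2, SimpleGraph.edist_comm]
      exact hdist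
    · have heq1 : e = ⟨s(x,y), he2G⟩ := Subtype.ext he''
      have heq2 : f = ⟨s(u1,u2), he1G⟩ := Subtype.ext hf''
      rw [heq1, heq2]
      exact hdist
    · exact absurd (he''.trans hf''.symm) hvalne
  · rw [he', hf'] at hceq; exact absurd hceq (by decide)
  · rw [he', hf'] at hceq; exact absurd hceq (by decide)
  · rw [he', hf'] at hceq; exact absurd hceq (by decide)
  · rw [he', hf'] at hceq; exact absurd hceq (by decide)
  · -- 0,0
    show (([1,1,1,3].get ⟨_, hcolv e⟩ : ℕ) : ℕ∞) + 1 ≤ G.lineGraph.edist e f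
    rw [hfin 0 (by decide) he', hget0]
    have htwo : ((1:ℕ) : ℕ∞) + 1 = 2 := by norm_num
    rw [htwo]
    exact mat_two_le_edist hM1mat hnef hem hfm
  · rw [he', hf'] at hceq; exact absurd hceq (by decide)
  · rw [he', hf'] at hceq; exact absurd hceq (by decide)
  · rw [he', hf'] at hceq; exact absurd hceq (by decide)
  · rw [he', hf'] at hceq; exact absurd hceq (by decide)
  · -- 1,1
    show (([1,1,1,3].get ⟨_, hcolv e⟩ : ℕ) : ℕ∞) + 1 ≤ G.lineGraph.edist e f
    rw [hfin 1 (by decide) he', hget1]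
    have htwo : ((1:ℕ) : ℕ∞) + 1 = 2 := by norm_num
    rw [htwo]
    exact mat_two_le_edist hM2mat hnef hem hfm
  · rw [he', hf'] at hceq; exact absurd hceq (by decide)
  · rw [he', hf'] at hceq; exact absurd hceq (by decide)
  · rw [he', hf'] at hceq; exact absurd hceq (by decide)
  · rw [he', hf'] at hceq; exact absurd hceq (by decide)
  · -- 2,2
    show (([1,1,1,3].get ⟨_, hcolv e⟩ : ℕ) : ℕ∞) + 1 ≤ G.lineGraph.edist e f
    rw [hfin 2 (by decide) he', hget2]
    have htwo : ((1:ℕ) : ℕ∞) + 1 = 2 := by norm_num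
    rw [htwo]
    exact mat_two_le_edist hM3mat hnef hem hfm

end PackAux

/-- A cubic graph of oddness 2 with a 2-factor whose odd cycles are exactly `C1` and `C2`,
where one cycle `C` has length at least 5 and the other odd cycle contains an edge both of
whose endpoints have no neighbor on `C`, admits a (1,1,1,3)-packing edge-coloring. -/
theorem statement_3 {V : Type*} [Fintype V] (G : SimpleGraph V)
    (hconn : G.Connected) (hcubic : IsCubicGraph G)
    (F : G.Subgraph) (hF : IsTwoFactor F)
    (C1 C2 : F.spanningCoe.ConnectedComponent) (hne : C1 ≠ C2)
    (hodd : oddCycles F = {C1, C2})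
    (hoddness : ∀ F' : G.Subgraph, IsTwoFactor F' → 2 ≤ (oddCycles F').ncard)
    (hyp : (5 ≤ C1.supp.ncard ∧ ∃ x y, F.Adj x y ∧ x ∈ C2.supp ∧
              (∀ w, G.Adj x w → w ∉ C1.supp) ∧ (∀ w, G.Adj y w → w ∉ C1.supp)) ∨
           (5 ≤ C2.supp.ncard ∧ ∃ x y, F.Adj x y ∧ x ∈ C1.supp ∧
              (∀ w, G.Adj x w → w ∉ C2.supp) ∧ (∀ w, G.Adj y w → w ∉ C2.supp))) :
    HasPackingEdgeColoring G [1, 1, 1, 3] := by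
  rcases hyp with ⟨h5, x, y, hxy, hx, hax, hay⟩ | ⟨h5, x, y, hxy, hx, hax, hay⟩
  · exact PackAux.main_aux G hcubic F hF C1 C2 hne hodd h5 x y hxy hx hax hay
  · have hodd' : oddCycles F = {C2, C1} := by rw [hodd, Set.pair_comm]
    exact PackAux.main_aux G hcubic F hF C2 C1 hne.symm hodd' h5 x y hxy hx hax hay
end

section
/- Let G be a cubic graph having a 2-factor, let F be any 2-factor of G, and let A ⊆ E(F) be a set of type I. Then for every integer k ≥ 2, the graph G^k[A] has maximum degree at most a_k, where a_k = (2^{k+1} - (-1)^{k+1} - 3)/3. -/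
open SimpleGraph

variable {V : Type*}


namespace PackAux



/-- automaton step: state `true` = current edge is an M-edge. -/
def aStep (s b : Bool) : Bool := if s then false else b

/-- run the automaton on a list of moves. -/
def aRun (s : Bool) (l : List Bool) : Bool := l.foldl aStep s

@[simp] lemma aRun_nil (s : Bool) : aRun s [] = s := rfl
@[simp] lemma aRun_cons (s b : Bool) (l : List Bool) :
    aRun s (b :: l) = aRun (aStep s b) l := rfl

/-- words of length ≤ n driving the automaton from state `s` to state `true`. -/
def W (s : Bool) (n : ℕ) : Set (List Bool) :=
  {l | l.length ≤ n ∧ aRun s l = true}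

lemma W_finite (s : Bool) (n : ℕ) : (W s n).Finite :=
  (List.finite_length_le Bool n).subset (fun _ h => h.1)

lemma W_false_zero : W false 0 = ∅ := by
  ext l
  simp only [W, Set.mem_setOf_eq, Set.mem_empty_iff_false, iff_false, not_and]
  intro h
  rw [Nat.le_zero, List.length_eq_zero_iff] at h
  subst h; simp

lemma W_true_zero : W true 0 = {[]} := by
  ext l
  simp only [W, Set.mem_setOf_eq, Set.mem_singleton_iff]
  constructor
  · rintro ⟨h, -⟩
    rwa [Nat.le_zero, List.length_eq_zero_iff] at h
  · rintro rfl; simp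

lemma W_false_succ (n : ℕ) :
    W false (n + 1) = (List.cons false) '' (W false n) ∪ (List.cons true) '' (W true n) := by
  ext l
  constructor
  · rintro ⟨hlen, hrun⟩
    match l with
    | [] => simp [aRun] at hrun
    | b :: t =>
      rcases b with _ | _
      · exact Or.inl ⟨t, ⟨by simpa using hlen, by simpa [aStep] using hrun⟩, rfl⟩
      · exact Or.inr ⟨t, ⟨by simpa using hlen, by simpa [aStep] using hrun⟩, rfl⟩
  · rintro (⟨t, ⟨hlen, hrun⟩, rfl⟩ | ⟨t, ⟨hlen, hrun⟩, rfl⟩) <;>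
      exact ⟨by simpa using hlen, by simpa [aStep] using hrun⟩

lemma W_true_succ (n : ℕ) :
    W true (n + 1) = {[]} ∪ ((List.cons false) '' (W false n) ∪ (List.cons true) '' (W false n)) := by
  ext l
  constructor
  · rintro ⟨hlen, hrun⟩
    match l with
    | [] => exact Or.inl rfl
    | b :: t =>
      rcases b with _ | _
      · exact Or.inr <| Or.inl ⟨t, ⟨by simpa using hlen, by simpa [aStep] using hrun⟩, rfl⟩
      · exact Or.inr <| Or.inr ⟨t, ⟨by simpa using hlen, by simpa [aStep] using hrun⟩, rfl⟩
  · rintro (rfl | (⟨t, ⟨hlen, hrun⟩, rfl⟩ | ⟨t, ⟨hlen, hrun⟩, rfl⟩))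
    · exact ⟨by simp, rfl⟩
    all_goals exact ⟨by simpa using hlen, by simpa [aStep] using hrun⟩

lemma ncard_W_false_succ (n : ℕ) :
    (W false (n + 1)).ncard = (W false n).ncard + (W true n).ncard := by
  rw [W_false_succ, Set.ncard_union_eq ?_ (((W_finite _ _).image _))
    (((W_finite _ _).image _)),
    Set.ncard_image_of_injective _ (List.cons_injective),
    Set.ncard_image_of_injective _ (List.cons_injective)]
  rw [Set.disjoint_left]
  rintro l ⟨t, -, rfl⟩ ⟨t', -, h⟩
  simp at h

lemma ncard_W_true_succ (n : ℕ) :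
    (W true (n + 1)).ncard = 1 + ((W false n).ncard + (W false n).ncard) := by
  rw [W_true_succ]
  rw [Set.ncard_union_eq ?_ (Set.finite_singleton _)
      (((W_finite _ _).image _).union ((W_finite _ _).image _)),
    Set.ncard_union_eq ?_ (((W_finite _ _).image _)) (((W_finite _ _).image _)),
    Set.ncard_image_of_injective _ (List.cons_injective),
    Set.ncard_image_of_injective _ (List.cons_injective), Set.ncard_singleton]
  · rw [Set.disjoint_left]
    rintro l ⟨t, -, rfl⟩ ⟨t', -, h⟩
    simp at h
  · rw [Set.disjoint_left]
    rintro l rfl (⟨t, -, h⟩ | ⟨t, -, h⟩) <;> simp at h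

/-- closed form, jointly for the two starting states. -/
lemma ncard_W_closed (n : ℕ) :
    (6 * (W false n).ncard : ℤ) = 2 ^ (n + 2) - (-1) ^ n - 3 ∧
    (3 * (W true n).ncard : ℤ) = 2 ^ (n + 1) + (-1) ^ n := by
  induction n with
  | zero => simp [W_false_zero, W_true_zero]
  | succ n ih =>
    obtain ⟨h1, h2⟩ := ih
    constructor
    · rw [ncard_W_false_succ]; push_cast
      have : (2:ℤ)^(n+1+2) = 2*2^(n+2) := by ring
      rw [this]
      have h3 : ((-1:ℤ))^(n+1) = -(-1)^n := by ring
      have h5 : (2:ℤ)^(n+2) = 2*2^(n+1) := by ring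
      rw [h3]; linarith
    · rw [ncard_W_true_succ]; push_cast
      have : (2:ℤ)^(n+1+1) = 2*2^(n+1) := by ring
      rw [this]
      have h3 : ((-1:ℤ))^(n+1) = -(-1)^n := by ring
      have h5 : (2:ℤ)^(n+2) = 2*2^(n+1) := by ring
      rw [h3]; linarith


open scoped Classical
set_option linter.unusedSectionVars false


variable {V : Type*} [Nonempty V] [Fintype V]

instance : Nonempty (Sym2 V) := ⟨s(Classical.arbitrary V, Classical.arbitrary V)⟩

noncomputable def pickVert (x : Sym2 V) : V := Classical.epsilon (· ∈ x)

lemma pickVert_mem (x : Sym2 V) : pickVert x ∈ x := by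
  obtain ⟨a, b⟩ := x
  exact Classical.epsilon_spec (p := (· ∈ s(a, b))) ⟨a, by simp⟩

noncomputable def pickOther (x : Sym2 V) (w : V) : V :=
  Classical.epsilon (fun u => x = s(w, u) ∧ u ≠ w)

lemma pickOther_spec {G : SimpleGraph V} {x : Sym2 V} {w : V}
    (hx : x ∈ G.edgeSet) (hw : w ∈ x) : x = s(w, pickOther x w) ∧ pickOther x w ≠ w := by
  apply Classical.epsilon_spec (p := fun u => x = s(w, u) ∧ u ≠ w)
  obtain ⟨u, rfl⟩ := Sym2.mem_iff_exists.mp hw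
  refine ⟨u, rfl, fun h => ?_⟩
  subst h
  exact (G.ne_of_adj (G.mem_edgeSet.mp hx)) rfl

variable (G : SimpleGraph V) (F : G.Subgraph)

noncomputable def mEdge (w : V) : Sym2 V :=
  Classical.epsilon fun x => x ∈ G.edgeSet ∧ w ∈ x ∧ x ∉ F.edgeSet

noncomputable def otherF (g : Sym2 V) (w : V) : Sym2 V :=
  Classical.epsilon fun x => x ∈ F.edgeSet ∧ w ∈ x ∧ x ≠ g

noncomputable def fEdge1 (w : V) : Sym2 V :=
  Classical.epsilon fun x => x ∈ F.edgeSet ∧ w ∈ x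

noncomputable def fEdge2 (w : V) : Sym2 V :=
  Classical.epsilon fun x => x ∈ F.edgeSet ∧ w ∈ x ∧ x ≠ fEdge1 G F w

open Classical in
noncomputable def nextEdge (g : Sym2 V) (w : V) (b : Bool) : Sym2 V :=
  if g ∈ F.edgeSet then (if b then mEdge G F w else otherF G F g w)
  else (if b then fEdge1 G F w else fEdge2 G F w)

noncomputable def exec : Sym2 V × V → List Bool → Sym2 V × V
  | p, [] => p
  | (g, w), b :: l =>
      let g' := nextEdge G F g w b
      exec (g', pickOther g' w) l

@[simp] lemma exec_nil (p : Sym2 V × V) : exec G F p [] = p := rfl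

@[simp] lemma exec_cons (g : Sym2 V) (w : V) (b : Bool) (l : List Bool) :
    exec G F (g, w) (b :: l) =
      exec G F (nextEdge G F g w b, pickOther (nextEdge G F g w b) w) l := rfl

/-- the set of `F`-edges at a vertex. -/
def fAt (w : V) : Set (Sym2 V) := {x | x ∈ F.edgeSet ∧ w ∈ x}

/-- the set of `G`-edges at a vertex. -/
def gAt (w : V) : Set (Sym2 V) := {x | x ∈ G.edgeSet ∧ w ∈ x}

lemma edgesAt_eq_image (H : SimpleGraph V) (w : V) :
    {x | x ∈ H.edgeSet ∧ w ∈ x} = (fun u => s(w, u)) '' (H.neighborSet w) := by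
  ext x
  constructor
  · rintro ⟨hx, hw⟩
    obtain ⟨u, rfl⟩ := Sym2.mem_iff_exists.mp hw
    exact ⟨u, H.mem_edgeSet.mp hx, rfl⟩
  · rintro ⟨u, hu, rfl⟩
    exact ⟨H.mem_edgeSet.mpr hu, by simp⟩

lemma ncard_edgesAt (H : SimpleGraph V) (w : V) :
    {x | x ∈ H.edgeSet ∧ w ∈ x}.ncard = (H.neighborSet w).ncard := by
  rw [edgesAt_eq_image]
  exact Set.ncard_image_of_injOn (fun a _ b _ h => Sym2.congr_right.mp h)


variable {G F}

lemma ncard_fAt {w : V} (h2 : (F.neighborSet w).ncard = 2) : (fAt G F w).ncard = 2 := by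
  have : fAt G F w = (fun u => s(w, u)) '' (F.neighborSet w) := by
    ext x
    constructor
    · rintro ⟨hx, hw⟩
      obtain ⟨u, rfl⟩ := Sym2.mem_iff_exists.mp hw
      exact ⟨u, Subgraph.mem_edgeSet.mp hx, rfl⟩
    · rintro ⟨u, hu, rfl⟩
      exact ⟨Subgraph.mem_edgeSet.mpr hu, by simp⟩
  rw [this, Set.ncard_image_of_injOn (fun a _ b _ h => Sym2.congr_right.mp h)]
  exact h2

lemma ncard_mAt {w : V} (h3 : (G.neighborSet w).ncard = 3)
    (h2 : (F.neighborSet w).ncard = 2) : (gAt G w \ fAt G F w).ncard = 1 := by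
  have hsub : fAt G F w ⊆ gAt G w := fun x hx => ⟨F.edgeSet_subset hx.1, hx.2⟩
  rw [Set.ncard_diff hsub (Set.toFinite _), ncard_fAt h2]
  have : (gAt G w).ncard = 3 := by
    have := ncard_edgesAt G w
    simpa [gAt] using this.trans h3
  omega

lemma mEdge_eq {w : V} (h3 : (G.neighborSet w).ncard = 3)
    (h2 : (F.neighborSet w).ncard = 2) {x : Sym2 V}
    (hx : x ∈ G.edgeSet) (hw : w ∈ x) (hxF : x ∉ F.edgeSet) : mEdge G F w = x := by
  obtain ⟨a, ha⟩ := Set.ncard_eq_one.mp (ncard_mAt h3 h2)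
  have hmem : ∀ y : Sym2 V, y ∈ G.edgeSet → w ∈ y → y ∉ F.edgeSet → y = a := by
    intro y h1 hw' h2'
    have : y ∈ gAt G w \ fAt G F w := ⟨⟨h1, hw'⟩, fun hc => h2' hc.1⟩
    rwa [ha, Set.mem_singleton_iff] at this
  have hspec := Classical.epsilon_spec
    (p := fun y => y ∈ G.edgeSet ∧ w ∈ y ∧ y ∉ F.edgeSet) ⟨x, hx, hw, hxF⟩
  have h1 : mEdge G F w = a := hmem _ hspec.1 hspec.2.1 hspec.2.2
  exact h1.trans (hmem x hx hw hxF).symm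

lemma pair_cases {S : Set (Sym2 V)} {p q : Sym2 V} (hS : S = {p, q}) {y : Sym2 V}
    (hy : y ∈ S) : y = p ∨ y = q := by
  rw [hS] at hy; simpa using hy

lemma otherF_eq {w : V} (h2 : (F.neighborSet w).ncard = 2) {g x : Sym2 V}
    (hg : g ∈ F.edgeSet) (hgw : w ∈ g) (hx : x ∈ F.edgeSet) (hxw : w ∈ x)
    (hne : x ≠ g) : otherF G F g w = x := by
  obtain ⟨p, q, hpq, hS⟩ := Set.ncard_eq_two.mp (ncard_fAt h2)
  have hspec := Classical.epsilon_spec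
    (p := fun y => y ∈ F.edgeSet ∧ w ∈ y ∧ y ≠ g) ⟨x, hx, hxw, hne⟩
  have hge := pair_cases hS (show g ∈ fAt G F w from ⟨hg, hgw⟩)
  have hxe := pair_cases hS (show x ∈ fAt G F w from ⟨hx, hxw⟩)
  have hee := pair_cases hS (show otherF G F g w ∈ fAt G F w from ⟨hspec.1, hspec.2.1⟩)
  have hneg : otherF G F g w ≠ g := hspec.2.2
  rcases hge with rfl | rfl
  · rcases hxe with rfl | rfl
    · exact absurd rfl hne
    · rcases hee with h | h
      · exact absurd h hneg
      · exact h
  · rcases hxe with rfl | rfl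
    · rcases hee with h | h
      · exact h
      · exact absurd h hneg
    · exact absurd rfl hne

lemma fEdge_cover {w : V} (h2 : (F.neighborSet w).ncard = 2) {x : Sym2 V}
    (hx : x ∈ F.edgeSet) (hxw : w ∈ x) : x = fEdge1 G F w ∨ x = fEdge2 G F w := by
  obtain ⟨p, q, hpq, hS⟩ := Set.ncard_eq_two.mp (ncard_fAt h2)
  have h1 := Classical.epsilon_spec
    (p := fun y => y ∈ F.edgeSet ∧ w ∈ y) ⟨x, hx, hxw⟩
  have hf1mem : fEdge1 G F w ∈ fAt G F w := ⟨h1.1, h1.2⟩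
  have hex2 : ∃ y, y ∈ F.edgeSet ∧ w ∈ y ∧ y ≠ fEdge1 G F w := by
    rcases pair_cases hS hf1mem with hp | hq
    · have hq' : q ∈ fAt G F w := hS ▸ (by simp)
      exact ⟨q, hq'.1, hq'.2, by rw [hp]; exact hpq.symm⟩
    · have hp' : p ∈ fAt G F w := hS ▸ (by simp)
      exact ⟨p, hp'.1, hp'.2, by rw [hq]; exact hpq⟩
  have h2' := Classical.epsilon_spec
    (p := fun y => y ∈ F.edgeSet ∧ w ∈ y ∧ y ≠ fEdge1 G F w) hex2
  have hf2mem : fEdge2 G F w ∈ fAt G F w := ⟨h2'.1, h2'.2.1⟩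
  have hne : fEdge2 G F w ≠ fEdge1 G F w := h2'.2.2
  have hxm := pair_cases hS (show x ∈ fAt G F w from ⟨hx, hxw⟩)
  rcases pair_cases hS hf1mem with h1p | h1q
  · rcases pair_cases hS hf2mem with h2p | h2q
    · exact absurd (h2p.trans h1p.symm) hne
    · rcases hxm with rfl | rfl
      · exact Or.inl h1p.symm
      · exact Or.inr h2q.symm
  · rcases pair_cases hS hf2mem with h2p | h2q
    · rcases hxm with rfl | rfl
      · exact Or.inr h2p.symm
      · exact Or.inl h1q.symm
    · exact absurd (h2q.trans h1q.symm) hne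

lemma stepCover {w : V} (h3 : (G.neighborSet w).ncard = 3)
    (h2 : (F.neighborSet w).ncard = 2) {g g1 : Sym2 V}
    (hg : g ∈ G.edgeSet) (hg1 : g1 ∈ G.edgeSet) (hgw : w ∈ g) (hg1w : w ∈ g1)
    (hne : g ≠ g1) :
    ∃ b : Bool, nextEdge G F g w b = g1 ∧
      aStep (!decide (g ∈ F.edgeSet)) b = !decide (g1 ∈ F.edgeSet) := by
  classical
  by_cases hgF : g ∈ F.edgeSet
  · by_cases hg1F : g1 ∈ F.edgeSet
    · refine ⟨false, ?_, by simp [aStep, hgF, hg1F]⟩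
      simp only [nextEdge, if_pos hgF, if_neg (Bool.false_ne_true)]
      exact otherF_eq h2 hgF hgw hg1F hg1w hne.symm
    · refine ⟨true, ?_, by simp [aStep, hgF, hg1F]⟩
      simp only [nextEdge, if_pos hgF, if_pos rfl]
      exact mEdge_eq h3 h2 hg1 hg1w hg1F
  · have hg1F : g1 ∈ F.edgeSet := by
      by_contra hg1F
      obtain ⟨a, ha⟩ := Set.ncard_eq_one.mp (ncard_mAt (F := F) h3 h2)
      have m1 : g ∈ gAt G w \ fAt G F w := ⟨⟨hg, hgw⟩, fun hc => hgF hc.1⟩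
      have m2 : g1 ∈ gAt G w \ fAt G F w := ⟨⟨hg1, hg1w⟩, fun hc => hg1F hc.1⟩
      rw [ha, Set.mem_singleton_iff] at m1 m2
      exact hne (m1.trans m2.symm)
    rcases fEdge_cover h2 hg1F hg1w with h | h
    · exact ⟨true, by simp [nextEdge, if_neg hgF, h.symm], by simp [aStep, hgF, hg1F]⟩
    · exact ⟨false, by simp [nextEdge, if_neg hgF, h.symm], by simp [aStep, hgF, hg1F]⟩



lemma comp_eq_of_F_edge {x : Sym2 V} {u w : V} (hx : x ∈ F.edgeSet)
    (hu : u ∈ x) (hw : w ∈ x) :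
    F.spanningCoe.connectedComponentMk u = F.spanningCoe.connectedComponentMk w := by
  rcases eq_or_ne u w with rfl | hne
  · rfl
  · have hxeq : x = s(u, w) := ((Sym2.mem_and_mem_iff hne).mp ⟨hu, hw⟩)
    rw [hxeq] at hx
    have hadj : F.spanningCoe.Adj u w := Subgraph.mem_edgeSet.mp hx
    exact ConnectedComponent.sound hadj.reachable

lemma mem_cycleEdges_of_mem {x : Sym2 V} {w : V} (hx : x ∈ F.edgeSet) (hw : w ∈ x) :
    x ∈ cycleEdges F (F.spanningCoe.connectedComponentMk w) := by
  refine ⟨hx, fun v hv => ?_⟩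
  rw [ConnectedComponent.mem_supp_iff]
  exact comp_eq_of_F_edge hx hv hw

lemma walkWord (h3 : ∀ v, (G.neighborSet v).ncard = 3)
    (h2 : ∀ v, (F.neighborSet v).ncard = 2)
    {f : Sym2 V} (hfF : f ∈ F.edgeSet) (hfG : f ∈ G.edgeSet) :
    ∀ n : ℕ, ∀ (g : G.edgeSet) (w : V), w ∈ (g : Sym2 V) →
    ∀ (p : G.lineGraph.Walk g ⟨f, hfG⟩), p.length ≤ n →
    ((p.length : ℕ∞) = G.lineGraph.edist g ⟨f, hfG⟩) →
    (1 ≤ p.length → w ∈ ((p.getVert 1 : G.edgeSet) : Sym2 V)) →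
    (f ∈ cycleEdges F (F.spanningCoe.connectedComponentMk w)) ∨
    (∃ l : List Bool, l.length + 1 ≤ p.length ∧
      aRun (!decide ((g : Sym2 V) ∈ F.edgeSet)) l = true ∧
      f ∈ cycleEdges F (F.spanningCoe.connectedComponentMk
        (exec G F ((g : Sym2 V), w) l).2)) := by
  intro n
  induction n with
  | zero =>
    intro g w hw p hlen _ _
    cases p with
    | nil => exact Or.inl (mem_cycleEdges_of_mem hfF hw)
    | cons h q => simp [Walk.length_cons] at hlen
  | succ n ih =>
    intro g w hw p hlen hshort hfirst
    cases p with
    | nil => exact Or.inl (mem_cycleEdges_of_mem hfF hw)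
    | cons h q =>
      rename_i g1
      have hw1 : w ∈ (g1 : Sym2 V) := by
        have := hfirst (by simp [Walk.length_cons])
        rwa [Walk.getVert_cons_succ, Walk.getVert_zero] at this
      have hg1G : (g1 : Sym2 V) ∈ G.edgeSet := g1.2
      have hgG : (g : Sym2 V) ∈ G.edgeSet := g.2
      have hne : g ≠ g1 := h.ne
      -- shortest-walk propagation
      have hqle : G.lineGraph.edist g1 ⟨f, hfG⟩ ≤ (q.length : ℕ∞) := q.edist_le
      have hq_ne_top : G.lineGraph.edist g1 ⟨f, hfG⟩ ≠ ⊤ :=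
        fun hc => by rw [hc] at hqle; exact (ENat.coe_lt_top q.length).not_ge hqle
      obtain ⟨q', hq'⟩ := exists_walk_of_edist_ne_top hq_ne_top
      have hsc := (Walk.cons h q').edist_le
      rw [← hshort] at hsc
      have hlen1 : q.length + 1 ≤ q'.length + 1 := by
        simp only [Walk.length_cons] at hsc
        exact_mod_cast hsc
      have hmq : q'.length ≤ q.length := by
        rw [← hq'] at hqle; exact_mod_cast hqle
      have hq_edist : (q.length : ℕ∞) = G.lineGraph.edist g1 ⟨f, hfG⟩ := by
        rw [← hq']
        have : q.length = q'.length := by omega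
        exact_mod_cast this
      have hpo := pickOther_spec (G := G) hg1G hw1
      -- first-step hypothesis for `q`
      have hfirstq : 1 ≤ q.length →
          pickOther (g1 : Sym2 V) w ∈ ((q.getVert 1 : G.edgeSet) : Sym2 V) := by
        intro hq1
        cases q with
        | nil => simp at hq1
        | cons h2 q2 =>
          rename_i g2
          rw [Walk.getVert_cons_succ, Walk.getVert_zero]
          obtain ⟨hne2, v2, hv2g1, hv2g2⟩ := lineGraph_adj_iff_exists.mp h2
          have hwg2 : w ∉ (g2 : Sym2 V) := by
            intro hwg2
            by_cases hgg2 : g = g2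
            · subst hgg2
              have hle := q2.edist_le
              rw [← hshort] at hle
              simp only [Walk.length_cons] at hle
              have : q2.length + 1 + 1 ≤ q2.length := by exact_mod_cast hle
              omega
            · have hadj : G.lineGraph.Adj g g2 :=
                lineGraph_adj_iff_exists.mpr ⟨hgg2, w, hw, hwg2⟩
              have hle := (Walk.cons hadj q2).edist_le
              rw [← hshort] at hle
              simp only [Walk.length_cons] at hle
              have : q2.length + 1 + 1 ≤ q2.length + 1 := by exact_mod_cast hle
              omega
          have hv2ne : v2 ≠ w := fun hh => hwg2 (hh ▸ hv2g2)
          have hv2eq : v2 = pickOther (g1 : Sym2 V) w := by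
            rw [hpo.1] at hv2g1
            rcases Sym2.mem_iff.mp hv2g1 with h' | h'
            · exact absurd h' hv2ne
            · exact h'
          rwa [← hv2eq]
      have hqlen : q.length ≤ n := by
        rw [Walk.length_cons] at hlen; omega
      have hwmem : pickOther (g1 : Sym2 V) w ∈ (g1 : Sym2 V) := by
        have hself : pickOther (g1 : Sym2 V) w ∈ s(w, pickOther (g1 : Sym2 V) w) := by simp
        rwa [← hpo.1] at hself
      obtain ⟨b, hb1, hb2⟩ := stepCover (h3 w) (h2 w) hgG hg1G hw hw1
        (fun hcoe => hne (Subtype.ext hcoe))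
      rcases ih g1 (pickOther (g1 : Sym2 V) w) hwmem q hqlen hq_edist hfirstq with
        hcase | ⟨l, hlenl, hrun, hcyc⟩
      · by_cases hg1F : (g1 : Sym2 V) ∈ F.edgeSet
        · left
          have hcomp : F.spanningCoe.connectedComponentMk (pickOther (g1 : Sym2 V) w)
              = F.spanningCoe.connectedComponentMk w :=
            comp_eq_of_F_edge hg1F hwmem hw1
          rwa [hcomp] at hcase
        · right
          have hq1 : 1 ≤ q.length := by
            rcases Nat.eq_zero_or_pos q.length with h0 | h0
            · exfalso
              have := Walk.eq_of_length_eq_zero h0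
              apply hg1F
              rw [show (g1 : Sym2 V) = f from congrArg Subtype.val this]
              exact hfF
            · exact h0
          refine ⟨[b], by simp only [List.length_cons, List.length_nil, Walk.length_cons]; omega, ?_, ?_⟩
          · simp only [aRun_cons, aRun_nil, hb2]
            simp [hg1F]
          · rw [exec_cons, hb1]
            exact hcase
      · right
        refine ⟨b :: l, by rw [Walk.length_cons]; simpa using hlenl, ?_, ?_⟩
        · rw [aRun_cons, hb2]
          exact hrun
        · rw [exec_cons, hb1]
          exact hcyc

end PackAux

/-- For any 2-factor `F` of a cubic graph `G`, any set `A ⊆ E(F)` of type I and any `k ≥ 2`,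
the graph `G^k[A]` has maximum degree at most `a_k = (2^(k+1) - (-1)^(k+1) - 3)/3`. -/
theorem statement_6 {V : Type*} [Fintype V] (G : SimpleGraph V)
    (hconn : G.Connected) (hcubic : IsCubicGraph G)
    (F : G.Subgraph) (hF : IsTwoFactor F)
    (A : Set (Sym2 V)) (hA : IsTypeI F A)
    (k : ℕ) (hk : 2 ≤ k) :
    ∀ e : A, (((distPowerGraph G k A).neighborSet e).ncard : ℤ)
      ≤ (2 ^ (k + 1) - (-1) ^ (k + 1) - 3) / 3 := by
  classical
  haveI : Nonempty V := hconn.nonempty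
  obtain ⟨hspan, h2⟩ := hF
  obtain ⟨hAF, hAc⟩ := hA
  have h3 : ∀ v, (G.neighborSet v).ncard = 3 := hcubic
  -- uniqueness of A-edges on a cycle
  have typeI_unique : ∀ (c : F.spanningCoe.ConnectedComponent) (x y : Sym2 V),
      x ∈ A → y ∈ A → x ∈ cycleEdges F c → y ∈ cycleEdges F c → x = y := by
    intro c x y hxA hyA hxc hyc
    rcases Classical.em (Odd c.supp.ncard) with hodd | hodd
    · obtain ⟨a, ha⟩ := Set.ncard_eq_one.mp ((hAc c).1 hodd)
      have hx : x ∈ A ∩ cycleEdges F c := ⟨hxA, hxc⟩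
      have hy : y ∈ A ∩ cycleEdges F c := ⟨hyA, hyc⟩
      rw [ha, Set.mem_singleton_iff] at hx hy
      exact hx.trans hy.symm
    · have := (hAc c).2 hodd
      have hx : x ∈ A ∩ cycleEdges F c := ⟨hxA, hxc⟩
      rw [this] at hx
      exact absurd hx (Set.notMem_empty x)
  intro e
  set eS : Sym2 V := (e : Sym2 V) with heSdef
  have heA : eS ∈ A := e.2
  have heF : eS ∈ F.edgeSet := hAF heA
  have heG : eS ∈ G.edgeSet := F.edgeSet_subset heF
  set wOf : Bool → V := fun d =>
    if d then PackAux.pickVert eS else PackAux.pickOther eS (PackAux.pickVert eS) with hwOf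
  -- the encoding property
  set Q : ↥A → (Bool × List Bool) → Prop := fun x p =>
    p.2 ∈ PackAux.W false (k - 1) ∧
      (x : Sym2 V) ∈ cycleEdges F (F.spanningCoe.connectedComponentMk
        (PackAux.exec G F (eS, wOf p.1) p.2).2) with hQ
  have main_ex : ∀ x ∈ (distPowerGraph G k A).neighborSet e, ∃ p, Q x p := by
    intro x hx
    obtain ⟨hne, he', hx', hdist⟩ := hx
    have hxA : (x : Sym2 V) ∈ A := x.2
    have hxF : (x : Sym2 V) ∈ F.edgeSet := hAF hxA
    have hxG : (x : Sym2 V) ∈ G.edgeSet := F.edgeSet_subset hxF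
    have hne_top : G.lineGraph.edist ⟨eS, heG⟩ ⟨(x : Sym2 V), hxG⟩ ≠ ⊤ := by
      intro hc
      have : (⊤ : ℕ∞) ≤ (k : ℕ∞) := by
        rw [← hc]; exact hdist
      simp at this
    obtain ⟨p, hp⟩ := SimpleGraph.exists_walk_of_edist_ne_top hne_top
    have hplen : p.length ≤ k := by
      have : (p.length : ℕ∞) ≤ (k : ℕ∞) := by rw [hp]; exact hdist
      exact_mod_cast this
    have hp1 : 1 ≤ p.length := by
      rcases Nat.eq_zero_or_pos p.length with h0 | h0
      · exfalso
        have hee := SimpleGraph.Walk.eq_of_length_eq_zero h0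
        have : eS = (x : Sym2 V) := Subtype.mk_eq_mk.mp hee
        exact hne (Subtype.ext this)
      · exact h0
    have hadj1 := p.adj_getVert_succ (i := 0) hp1
    rw [p.getVert_zero] at hadj1
    obtain ⟨hne0, v, hv1, hv2⟩ := SimpleGraph.lineGraph_adj_iff_exists.mp hadj1
    have hv_mem : v ∈ eS := hv1
    have hpo := PackAux.pickOther_spec (G := G) heG (PackAux.pickVert_mem eS)
    have hdv : ∃ d, wOf d = v := by
      by_cases hvp : v = PackAux.pickVert eS
      · exact ⟨true, by simp [hwOf, hvp]⟩
      · refine ⟨false, ?_⟩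
        have hmm := hv_mem
        rw [hpo.1, Sym2.mem_iff] at hmm
        rcases hmm with h' | h'
        · exact absurd h' hvp
        · simp [hwOf, h']
    obtain ⟨d, hd⟩ := hdv
    have hres := PackAux.walkWord (G := G) (F := F) h3 h2 hxF hxG k ⟨eS, heG⟩ v hv_mem
      p hplen hp (fun _ => hv2)
    rcases hres with hcase | ⟨l, hl1, hrun, hcyc⟩
    · exfalso
      have : eS = (x : Sym2 V) := typeI_unique _ eS x heA hxA
        (PackAux.mem_cycleEdges_of_mem heF hv_mem) hcase
      exact hne (Subtype.ext this)
    · refine ⟨(d, l), ⟨⟨?_, ?_⟩, ?_⟩⟩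
      · show l.length ≤ k - 1
        omega
      · have hst : (!decide (((⟨eS, heG⟩ : G.edgeSet) : Sym2 V) ∈ F.edgeSet)) = false := by
          simp [heF]
        rw [hst] at hrun
        exact hrun
      · show (x : Sym2 V) ∈ cycleEdges F (F.spanningCoe.connectedComponentMk
          (PackAux.exec G F (eS, wOf d) l).2)
        rw [hd]
        exact hcyc
  -- the injection
  have hfin : ((PackAux.W false (k - 1) : Set (List Bool))).Finite := PackAux.W_finite _ _
  set T : Set (Bool × List Bool) :=
    (Prod.mk false) '' (PackAux.W false (k - 1)) ∪ (Prod.mk true) '' (PackAux.W false (k - 1))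
    with hT
  have hTfin : T.Finite := (hfin.image _).union (hfin.image _)
  set Φ : ↥A → Bool × List Bool := fun x =>
    if hx : x ∈ (distPowerGraph G k A).neighborSet e then Classical.choose (main_ex x hx)
    else (false, []) with hΦ
  have hΦspec : ∀ x (hx : x ∈ (distPowerGraph G k A).neighborSet e), Q x (Φ x) := by
    intro x hx
    simp only [hΦ, dif_pos hx]
    exact Classical.choose_spec (main_ex x hx)
  have hmaps : ∀ x ∈ (distPowerGraph G k A).neighborSet e, Φ x ∈ T := by
    intro x hx
    have hq := (hΦspec x hx).1
    cases hΦx : Φ x with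
    | mk d l =>
      rw [hΦx] at hq
      rcases d with _ | _
      · exact Or.inl ⟨l, hq, rfl⟩
      · exact Or.inr ⟨l, hq, rfl⟩
  have hinj : Set.InjOn Φ ((distPowerGraph G k A).neighborSet e) := by
    intro x hx y hy hxy
    have hqx := (hΦspec x hx).2
    have hqy := (hΦspec y hy).2
    rw [hxy] at hqx
    exact Subtype.ext (typeI_unique _ _ _ x.2 y.2 hqx hqy)
  have hcard1 : ((distPowerGraph G k A).neighborSet e).ncard ≤ T.ncard :=
    Set.ncard_le_ncard_of_injOn Φ hmaps hinj hTfin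
  have hcard2 : T.ncard = 2 * (PackAux.W false (k - 1)).ncard := by
    rw [hT, Set.ncard_union_eq ?_ (hfin.image _) (hfin.image _),
      Set.ncard_image_of_injective _ (fun _ _ hh => congrArg Prod.snd hh),
      Set.ncard_image_of_injective _ (fun _ _ hh => congrArg Prod.snd hh)]
    · omega
    · rw [Set.disjoint_left]
      rintro z ⟨t, -, rfl⟩ ⟨t', -, h⟩
      simp at h
  obtain ⟨hW6, -⟩ := PackAux.ncard_W_closed (k - 1)
  rw [Int.le_ediv_iff_mul_le (by norm_num : (0:ℤ) < 3)]
  have hk1 : k - 1 + 2 = k + 1 := by omega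
  rw [hk1] at hW6
  have hsign : ((-1 : ℤ)) ^ (k - 1) = (-1) ^ (k + 1) := by
    have : k - 1 + 2 = k + 1 := by omega
    calc ((-1 : ℤ)) ^ (k - 1) = (-1) ^ (k - 1) * (-1) ^ 2 := by ring
    _ = (-1) ^ (k - 1 + 2) := by rw [pow_add]
    _ = (-1) ^ (k + 1) := by rw [this]
  rw [hsign] at hW6
  have : (((distPowerGraph G k A).neighborSet e).ncard : ℤ) ≤
      2 * ((PackAux.W false (k - 1)).ncard : ℤ) := by
    have := hcard1.trans_eq hcard2
    exact_mod_cast this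
  linarith
end

section
/- Let G be a cubic graph having a 2-factor F and let B ⊆ E(F) be a set of type II. Then for every integer k ≥ 2, the graph G^k[B] has maximum degree at most b_k, where b_k = (2^{k+2} + 2(-1)^{k+2} - 6)/3. -/
open SimpleGraph

variable {V : Type*}

private def bAux : ℕ → ℕ
  | 0 => 0
  | 1 => 4
  | (j+2) => bAux j + 2^(j+3)

private lemma bAux_eq : ∀ m : ℕ, (3 : ℤ) * bAux (m+1) = 2^(m+4) + 2*(-1)^(m+4) - 6 := by
  intro m
  induction m using Nat.twoStepInduction with
  | zero => norm_num [bAux]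
  | one => norm_num [bAux]
  | more n ih _ =>
    have h : bAux (n+3) = bAux (n+1) + 2^(n+4) := rfl
    push_cast [h]
    rw [mul_add, ih]
    have : ((-1 : ℤ))^(n+6) = (-1)^(n+4) := by ring
    rw [show n+2+4 = n+6 from rfl, this]
    ring

private lemma pair_count {α β : Type*} [Finite α] [Finite β] (P : Set (α × β)) (Q : Set α)
    (R : α → Set β) (n : ℕ) (h1 : ∀ p ∈ P, p.1 ∈ Q ∧ p.2 ∈ R p.1) (h2 : ∀ u, (R u).ncard ≤ n) :
    P.ncard ≤ n * Q.ncard := by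
  classical
  have hP : P.Finite := Set.toFinite _
  have hQ : Q.Finite := Set.toFinite _
  rw [Set.ncard_eq_toFinset_card P hP, Set.ncard_eq_toFinset_card Q hQ]
  refine Finset.card_le_mul_card_image_of_maps_to (f := Prod.fst) ?_ n ?_
  · intro p hp
    simp only [Set.Finite.mem_toFinset] at hp ⊢
    exact (h1 p hp).1
  · intro u _
    have hRu : (R u).Finite := Set.toFinite _
    calc (hP.toFinset.filter (fun p => p.1 = u)).card
        ≤ hRu.toFinset.card := by
          apply Finset.card_le_card_of_injOn (fun p => p.2)
          · intro p hp
            simp only [Finset.mem_coe, Finset.mem_filter, Set.Finite.mem_toFinset] at hp ⊢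
            rcases hp with ⟨hp1, rfl⟩
            exact (h1 p hp1).2
          · intro p hp q hq hpq
            simp only [Finset.coe_filter, Set.mem_setOf_eq, Set.Finite.mem_toFinset] at hp hq
            exact Prod.ext (hp.2.trans hq.2.symm) hpq
      _ ≤ n := by rw [← Set.ncard_eq_toFinset_card _ hRu]; exact h2 u

private lemma edge_mem_adj {V : Type*} {G : SimpleGraph V} {z : Sym2 V} (hz : z ∈ G.edgeSet)
    {u v : V} (hu : u ∈ z) (hv : v ∈ z) : u = v ∨ G.Adj u v := by
  induction z using Sym2.ind with
  | _ x y =>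
    rw [Sym2.mem_iff] at hu hv
    rw [SimpleGraph.mem_edgeSet] at hz
    rcases hu with rfl|rfl <;> rcases hv with rfl|rfl
    · exact Or.inl rfl
    · exact Or.inr hz
    · exact Or.inr hz.symm
    · exact Or.inl rfl

private lemma exists_other {V : Type*} {G : SimpleGraph V} {z : Sym2 V} (hz : z ∈ G.edgeSet)
    {v : V} (hv : v ∈ z) : ∃ w, w ∈ z ∧ G.Adj v w := by
  induction z using Sym2.ind with
  | _ x y =>
    rw [SimpleGraph.mem_edgeSet] at hz
    rw [Sym2.mem_iff] at hv
    rcases hv with rfl|rfl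
    · exact ⟨y, by simp, hz⟩
    · exact ⟨x, by simp, hz.symm⟩

private lemma walk_level {V : Type*} {G : SimpleGraph V} (lev : V → ℕ)
    (hstep : ∀ {u v : V}, G.Adj u v → lev v ≤ lev u + 1) :
    ∀ {g0 g : G.edgeSet} (W : G.lineGraph.Walk g0 g) (m : ℕ),
      (∃ v ∈ (g0 : Sym2 V), lev v ≤ m) → ∃ v ∈ (g : Sym2 V), lev v ≤ m + W.length := by
  intro g0 g W
  induction W with
  | nil => intro m hm; simpa using hm
  | @cons g0 g1 g h W ih =>
    intro m hm
    obtain ⟨v0, hv0m, hv0⟩ := hm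
    obtain ⟨-, u, hu1, hu2⟩ := (SimpleGraph.lineGraph_adj_iff_exists).1 h
    have hu : lev u ≤ m + 1 := by
      rcases edge_mem_adj g0.2 hv0m hu1 with rfl | hadj
      · omega
      · have := hstep hadj; omega
    obtain ⟨v, hvm, hv⟩ := ih (m+1) ⟨u, hu2, hu⟩
    refine ⟨v, hvm, ?_⟩
    rw [SimpleGraph.Walk.length_cons]
    omega

/-- For any 2-factor `F` of a cubic graph `G`, any set `B ⊆ E(F)` of type II and any `k ≥ 2`,
the graph `G^k[B]` has maximum degree at most `b_k = (2^(k+2) + 2·(-1)^(k+2) - 6)/3`. -/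
theorem statement_7 {V : Type*} [Fintype V] (G : SimpleGraph V)
    (hconn : G.Connected) (hcubic : IsCubicGraph G)
    (F : G.Subgraph) (hF : IsTwoFactor F)
    (B : Set (Sym2 V)) (hB : IsTypeII F B)
    (k : ℕ) (hk : 2 ≤ k) :
    ∀ e : B, (((distPowerGraph G k B).neighborSet e).ncard : ℤ)
      ≤ (2 ^ (k + 2) + 2 * (-1) ^ (k + 2) - 6) / 3 := by
  classical
  obtain ⟨hBF, hmatch, -⟩ := hB
  intro e
  have heB : (e : Sym2 V) ∈ B := e.2
  have hBG : ∀ f ∈ B, f ∈ G.edgeSet := fun f hf => F.edgeSet_subset (hBF hf)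
  have heG : (e : Sym2 V) ∈ G.edgeSet := hBG _ heB
  obtain ⟨a, b, hab⟩ : ∃ a b, (e : Sym2 V) = s(a, b) :=
    Sym2.inductionOn (e : Sym2 V) (fun x y => ⟨x, y, rfl⟩)
  have hadj : G.Adj a b := by rwa [hab, SimpleGraph.mem_edgeSet] at heG
  set lev : V → ℕ := fun v => min (G.dist a v) (G.dist b v) with hlev
  have hlev_a : lev a = 0 := by simp [hlev]
  have hlev_b : lev b = 0 := by simp [hlev]
  have hstep : ∀ {u v : V}, G.Adj u v → lev v ≤ lev u + 1 := by
    intro u v huv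
    have h1 : G.dist u v ≤ 1 := by
      have := SimpleGraph.dist_le huv.toWalk
      simpa using this
    have ha' : G.dist a v ≤ G.dist a u + 1 :=
      le_trans (hconn.dist_triangle (v := u)) (by omega)
    have hb' : G.dist b v ≤ G.dist b u + 1 :=
      le_trans (hconn.dist_triangle (v := u)) (by omega)
    simp only [hlev]
    omega
  have hlev0 : ∀ v, lev v = 0 → v = a ∨ v = b := by
    intro v h
    simp only [hlev, Nat.min_eq_zero_iff] at h
    rcases h with h | h
    · exact Or.inl ((hconn.dist_eq_zero_iff).1 h).symm
    · exact Or.inr ((hconn.dist_eq_zero_iff).1 h).symm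
  have hpar_ex : ∀ v, ∃ u, G.Adj v u ∧ lev u + 1 = max (lev v) 1 := by
    intro v
    rcases h : lev v with _ | l
    · rcases hlev0 v h with rfl | rfl
      · exact ⟨b, hadj, by simp [hlev_b]⟩
      · exact ⟨a, hadj.symm, by simp [hlev_a]⟩
    · have hvl : lev v = l + 1 := h
      have hone : G.dist a v = l + 1 ∨ G.dist b v = l + 1 := by
        simp only [hlev] at hvl
        omega
      have key : ∀ c : V, (c = a ∨ c = b) → G.dist c v = l + 1 →
          ∃ u, G.Adj v u ∧ lev u + 1 = max (lev v) 1 := by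
        intro c hc hd
        obtain ⟨p, hp⟩ := (hconn c v).exists_walk_length_eq_dist
        have hneq : v ≠ c := by
          rintro rfl
          rw [SimpleGraph.dist_self] at hd
          omega
        obtain ⟨x, hvx, q, hq⟩ := SimpleGraph.Walk.exists_eq_cons_of_ne hneq p.reverse
        have hql : q.length = l := by
          have hl := congrArg SimpleGraph.Walk.length hq
          rw [SimpleGraph.Walk.length_reverse, hp, hd, SimpleGraph.Walk.length_cons] at hl
          omega
        have hxc : G.dist c x ≤ l := by
          rw [SimpleGraph.dist_comm]
          exact le_trans (SimpleGraph.dist_le q) (by omega)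
        have hlevx : lev x ≤ l := by
          rcases hc with rfl | rfl
          · exact le_trans (min_le_left _ _) hxc
          · exact le_trans (min_le_right _ _) hxc
        have hge : l + 1 ≤ lev x + 1 := hvl ▸ hstep hvx.symm
        have hx : lev x = l := by omega
        refine ⟨x, hvx, ?_⟩
        rw [hvl, hx, max_eq_left (by omega : 1 ≤ l + 1)]
      rcases hone with hd | hd
      · have := key a (Or.inl rfl) hd; rwa [hvl] at this
      · have := key b (Or.inr rfl) hd; rwa [hvl] at this
  choose par hpar1 hpar2 using hpar_ex
  have hpar_succ : ∀ v l, lev v = l + 1 → lev (par v) = l := by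
    intro v l hv
    have h2 := hpar2 v
    rw [hv, max_eq_left (by omega : 1 ≤ l + 1)] at h2
    omega
  set T : ℕ → Set (V × V) :=
    fun l => {p : V × V | lev p.1 = l ∧ G.Adj p.1 p.2 ∧ p.2 ≠ par p.1} with hTdef
  set S : ℕ → Set V := fun l => {v | lev v = l} with hSdef
  have hT : ∀ l, (T l).ncard ≤ 2 * (S l).ncard := by
    intro l
    apply pair_count (T l) (S l) (fun u => {w | G.Adj u w ∧ w ≠ par u}) 2
    · rintro p ⟨h1, h2, h3⟩
      exact ⟨h1, h2, h3⟩
    · intro u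
      have hset : {w | G.Adj u w ∧ w ≠ par u} = G.neighborSet u \ {par u} := by
        ext w
        simp [SimpleGraph.mem_neighborSet]
      rw [hset, Set.ncard_diff_singleton_of_mem
        (show par u ∈ G.neighborSet u from hpar1 u), hcubic u]
  have hS : ∀ l, (S l).ncard ≤ 2^(l+1) := by
    intro l
    induction l with
    | zero =>
      have hsub : S 0 ⊆ {a, b} := by
        intro v hv
        rcases hlev0 v hv with rfl | rfl
        · exact Set.mem_insert _ _
        · exact Set.mem_insert_of_mem _ rfl
      calc (S 0).ncard ≤ ({a, b} : Set V).ncard :=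
            Set.ncard_le_ncard hsub (Set.toFinite _)
        _ ≤ 2 := by
            have := Set.ncard_insert_le a ({b} : Set V)
            simpa using this
        _ ≤ 2^(0+1) := by norm_num
    | succ l ih =>
      have hsub : (S (l+1)).ncard ≤ (T l).ncard := by
        apply Set.ncard_le_ncard_of_injOn (fun x => (par x, x))
        · intro x hx
          have hx' : lev x = l + 1 := hx
          have h1 : lev (par x) = l := hpar_succ x l hx'
          refine ⟨h1, (hpar1 x).symm, fun hxe => ?_⟩
          have hxe' : x = par (par x) := hxe
          have h2 := hpar2 (par x)
          rw [h1, ← hxe', hx'] at h2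
          have h3 : max l 1 ≤ l + 1 := max_le (by omega) (by omega)
          omega
        · intro x hx y hy hxy
          exact (Prod.ext_iff.1 hxy).2
      calc (S (l+1)).ncard ≤ (T l).ncard := hsub
        _ ≤ 2 * (S l).ncard := hT l
        _ ≤ 2 * 2^(l+1) := by omega
        _ = 2^(l+1+1) := by ring
  -- the sets A j of B-edges different from e with an endpoint at level ≤ j
  set A : ℕ → Set (Sym2 V) :=
    fun j => {f | f ∈ B ∧ f ≠ (e : Sym2 V) ∧ ∃ v, v ∈ f ∧ lev v ≤ j} with hAdef
  have hsep : ∀ f ∈ B, f ≠ (e : Sym2 V) → ∀ v, v ∈ f → v ∈ (e : Sym2 V) → False :=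
    fun f hf hne v hvf hve => hmatch (e : Sym2 V) heB f hf (Ne.symm hne) v ⟨hve, hvf⟩
  have huniq : ∀ f g, f ∈ B → g ∈ B → ∀ v : V, v ∈ f → v ∈ g → f = g := by
    intro f g hf hg v hvf hvg
    by_contra hne
    exact hmatch f hf g hg hne v ⟨hvf, hvg⟩
  have hlev_e : ∀ v, v ∈ (e : Sym2 V) → lev v = 0 := by
    intro v hv
    rw [hab, Sym2.mem_iff] at hv
    rcases hv with rfl | rfl
    · exact hlev_a
    · exact hlev_b
  have hcore : ∀ j, 1 ≤ j → ∀ f, f ∈ B → f ≠ (e : Sym2 V) →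
      (∃ v, v ∈ f ∧ lev v ≤ j) → (∀ v, v ∈ f → j ≤ lev v + 1) →
      ∃ p, p ∈ T (j-1) ∧ p.2 ∈ f := by
    intro j hj f hfB hfne hex0 hall
    obtain ⟨x0, hx0f, hx0⟩ := hex0
    by_cases hex : ∃ v, v ∈ f ∧ lev v = j - 1
    · obtain ⟨v, hvf, hv⟩ := hex
      rcases Nat.lt_or_ge j 2 with hj1 | hj2
      · -- j = 1 : impossible, v would be an endpoint of e
        have hj1' : j = 1 := by omega
        subst hj1'
        have hv0 : lev v = 0 := hv
        rcases hlev0 v hv0 with rfl | rfl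
        · exact absurd (by rw [hab, Sym2.mem_iff]; left; rfl)
            (fun hh => (hsep f hfB hfne _ hvf hh).elim)
        · exact absurd (by rw [hab, Sym2.mem_iff]; right; rfl)
            (fun hh => (hsep f hfB hfne _ hvf hh).elim)
      · obtain ⟨w, hwf, hvw⟩ := exists_other (hBG f hfB) hvf
        have hwlev : j - 1 ≤ lev w := by
          have := hall w hwf
          omega
        have hpv : lev (par v) = j - 2 := hpar_succ v (j-2) (by omega)
        refine ⟨(v, w), ⟨hv, hvw, fun hwe => ?_⟩, hwf⟩
        have hwe' : w = par v := hwe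
        rw [hwe', hpv] at hwlev
        omega
    · have hx0j : lev x0 = j := by
        have h1 := hall x0 hx0f
        have h2 : lev x0 ≠ j - 1 := fun hc => hex ⟨x0, hx0f, hc⟩
        omega
      have h1 : lev (par x0) = j - 1 := hpar_succ x0 (j-1) (by omega)
      refine ⟨(par x0, x0), ⟨h1, (hpar1 x0).symm, fun hxe => ?_⟩, hx0f⟩
      have hxe' : x0 = par (par x0) := hxe
      have h2 := hpar2 (par x0)
      rw [h1, ← hxe', hx0j] at h2
      have h3 : max (j-1) 1 ≤ j := max_le (by omega) hj
      omega
  -- the subsets of A j where no endpoint is at level ≤ j - 2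
  set D : ℕ → Set (Sym2 V) :=
    fun j => {f | f ∈ A j ∧ ∀ v, v ∈ f → j ≤ lev v + 1} with hDdef
  have hD : ∀ j, 1 ≤ j → (D j).ncard ≤ (T (j-1)).ncard := by
    intro j hj
    apply Set.ncard_le_ncard_of_injOn
      (fun f => if h : ∃ p, p ∈ T (j-1) ∧ p.2 ∈ f then h.choose else (a, a))
    · intro f hf
      obtain ⟨⟨hfB, hfne, hfex⟩, hfall⟩ := hf
      have hex : ∃ p, p ∈ T (j-1) ∧ p.2 ∈ f := hcore j hj f hfB hfne hfex hfall
      simp only [dif_pos hex]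
      exact hex.choose_spec.1
    · intro f hf g hg hfg
      obtain ⟨⟨hfB, hfne, hfex⟩, hfall⟩ := hf
      obtain ⟨⟨hgB, hgne, hgex⟩, hgall⟩ := hg
      have hexf : ∃ p, p ∈ T (j-1) ∧ p.2 ∈ f := hcore j hj f hfB hfne hfex hfall
      have hexg : ∃ p, p ∈ T (j-1) ∧ p.2 ∈ g := hcore j hj g hgB hgne hgex hgall
      simp only [dif_pos hexf, dif_pos hexg] at hfg
      have h1 := hexf.choose_spec.2
      have h2 := hexg.choose_spec.2
      rw [hfg] at h1
      exact huniq f g hfB hgB _ h1 h2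
  have hstepA : ∀ j, 1 ≤ j → (A j).ncard ≤ (A (j-2)).ncard + 2^(j+1) := by
    intro j hj
    have hsub : A j ⊆ A (j-2) ∪ D j := by
      intro f hf
      by_cases hc : ∀ v, v ∈ f → j ≤ lev v + 1
      · exact Or.inr ⟨hf, hc⟩
      · push_neg at hc
        obtain ⟨v, hvf, hv⟩ := hc
        obtain ⟨hfB, hfne, -⟩ := hf
        exact Or.inl ⟨hfB, hfne, v, hvf, by omega⟩
    calc (A j).ncard ≤ (A (j-2) ∪ D j).ncard :=
          Set.ncard_le_ncard hsub (Set.toFinite _)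
      _ ≤ (A (j-2)).ncard + (D j).ncard := Set.ncard_union_le _ _
      _ ≤ (A (j-2)).ncard + (T (j-1)).ncard := by
          have := hD j hj
          omega
      _ ≤ (A (j-2)).ncard + 2 * (S (j-1)).ncard := by
          have := hT (j-1)
          omega
      _ ≤ (A (j-2)).ncard + 2 * 2^(j-1+1) := by
          have := hS (j-1)
          omega
      _ = (A (j-2)).ncard + 2^(j+1) := by
          congr 1
          rw [← pow_succ']
          congr 1
          omega
  have hA0 : (A 0).ncard = 0 := by
    have : A 0 = ∅ := by
      ext f
      simp only [hAdef, Set.mem_setOf_eq, Set.mem_empty_iff_false, iff_false]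
      rintro ⟨hfB, hfne, v, hvf, hv⟩
      have hv0 : lev v = 0 := by omega
      rcases hlev0 v hv0 with rfl | rfl
      · exact hsep f hfB hfne _ hvf (by rw [hab, Sym2.mem_iff]; left; rfl)
      · exact hsep f hfB hfne _ hvf (by rw [hab, Sym2.mem_iff]; right; rfl)
    rw [this, Set.ncard_empty]
  have hAbound : ∀ j, (A j).ncard ≤ bAux j := by
    intro j
    induction j using Nat.twoStepInduction with
    | zero => rw [hA0]; exact Nat.zero_le _
    | one =>
      have := hstepA 1 le_rfl
      rw [show (1:ℕ) - 2 = 0 from rfl, hA0] at this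
      simpa [bAux] using this
    | more n ih _ =>
      have := hstepA (n+2) (by omega)
      rw [show n+2-2 = n from rfl, show n+2+1 = n+3 from rfl] at this
      have hb : bAux (n+2) = bAux n + 2^(n+3) := rfl
      rw [hb]
      exact le_trans this (Nat.add_le_add_right ih _)
  -- relate the neighbor set of e in the power graph to A (k-1)
  have hNA : ((distPowerGraph G k B).neighborSet e).ncard ≤ (A (k-1)).ncard := by
    refine Set.ncard_le_ncard_of_injOn (s := (distPowerGraph G k B).neighborSet e)
      (t := A (k-1)) (fun g => (g : Sym2 V)) ?_ ?_ (Set.toFinite _)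
    · intro g hg
      rw [SimpleGraph.mem_neighborSet] at hg
      obtain ⟨hne, he', hg', hd⟩ := hg
      refine ⟨g.2, fun hh => hne (Subtype.ext hh.symm), ?_⟩
      have hd' : G.lineGraph.edist ⟨(e : Sym2 V), he'⟩ ⟨(g : Sym2 V), hg'⟩ ≠ ⊤ := by
        intro hc
        rw [hc] at hd
        exact (by simp : ¬ ((⊤:ℕ∞) ≤ (k:ℕ∞))) hd
      obtain ⟨p, hp⟩ := SimpleGraph.exists_walk_of_edist_ne_top hd'
      have hplen : p.length ≤ k := by
        have : (p.length : ℕ∞) ≤ (k : ℕ∞) := le_trans (le_of_eq hp) hd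
        exact_mod_cast this
      have hnee : (⟨(e : Sym2 V), he'⟩ : G.edgeSet) ≠ ⟨(g : Sym2 V), hg'⟩ := by
        intro hc
        have hc' : (e : Sym2 V) = (g : Sym2 V) := Subtype.mk_eq_mk.mp hc
        exact hne (Subtype.ext hc')
      obtain ⟨g1, h01, q, hq⟩ := SimpleGraph.Walk.exists_eq_cons_of_ne hnee p
      obtain ⟨-, u, hu1, hu2⟩ := (SimpleGraph.lineGraph_adj_iff_exists).1 h01
      have hu0 : lev u = 0 := hlev_e u hu1
      obtain ⟨v, hvm, hv⟩ := walk_level lev hstep q 0 ⟨u, hu2, by omega⟩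
      have hqlen : q.length + 1 = p.length := by
        rw [hq, SimpleGraph.Walk.length_cons]
      exact ⟨v, hvm, by omega⟩
    · intro f hf g hg h
      exact Subtype.ext h
  obtain ⟨m, rfl⟩ : ∃ m, k = m + 2 := ⟨k - 2, by omega⟩
  have harith : ((2:ℤ) ^ (m+2+2) + 2 * (-1)^(m+2+2) - 6) / 3 = bAux (m+1) := by
    rw [show m+2+2 = m+4 from by ring, ← bAux_eq m]
    exact Int.mul_ediv_cancel_left _ (by norm_num)
  rw [harith]
  have h2 : (A (m+2-1)).ncard ≤ bAux (m+1) := by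
    rw [show m+2-1 = m+1 from rfl]
    exact hAbound (m+1)
  exact_mod_cast le_trans hNA h2
end

section
/- Let G be a cubic graph having a 2-factor F, let k ≥ 2 and ℓ ≥ 1 be integers, and let A, B, C be a partition of E(F) such that A is of type I and B and C are of type II. If the chromatic number of G^k[A] is at most ℓ, then G admits a (1,1,1,k^ℓ)-packing edge-coloring (three colors of radius 1 and ℓ colors of radius k). -/
open SimpleGraph

variable {V : Type*}

/-- If `E(F)` is partitioned into `A` of type I and `B`, `C` of type II, and `G^k[A]` is
`ℓ`-colorable, then `G` admits a (1,1,1,k^ℓ)-packing edge-coloring. -/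
theorem statement_8 {V : Type*} [Fintype V] (G : SimpleGraph V)
    (hconn : G.Connected) (hcubic : IsCubicGraph G)
    (F : G.Subgraph) (hF : IsTwoFactor F)
    (k l : ℕ) (hk : 2 ≤ k) (hl : 1 ≤ l)
    (A B C : Set (Sym2 V))
    (hpart : A ∪ B ∪ C = F.edgeSet)
    (hAB : Disjoint A B) (hAC : Disjoint A C) (hBC : Disjoint B C)
    (hA : IsTypeI F A) (hB : IsTypeII F B) (hC : IsTypeII F C)
    (hcol : (distPowerGraph G k A).Colorable l) :
    HasPackingEdgeColoring G ([1, 1, 1] ++ List.replicate l k) := by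
  classical
  obtain ⟨col⟩ := hcol
  set L : List ℕ := ([1, 1, 1] ++ List.replicate l k) with hL
  have hlen : L.length = 3 + l := by simp [hL]; omega
  -- evaluation of L
  have hval : ∀ (i : ℕ) (h : i < L.length), L.get ⟨i, h⟩ = if i < 3 then 1 else k := by
    intro i h
    match i with
    | 0 => rfl
    | 1 => rfl
    | 2 => rfl
    | (n+3) =>
      simp only [List.get_eq_getElem, hL]
      rw [List.getElem_append_right (by simp)]
      simp
  -- the perfect matching outside F
  have hM : ∀ e f : G.edgeSet, e ≠ f → (e : Sym2 V) ∉ F.edgeSet →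
      (f : Sym2 V) ∉ F.edgeSet → ∀ v : V, ¬(v ∈ (e : Sym2 V) ∧ v ∈ (f : Sym2 V)) := by
    rintro e f hne he hf v ⟨hve, hvf⟩
    obtain ⟨a, ha⟩ := Sym2.mem_iff_exists.mp hve
    obtain ⟨b, hb⟩ := Sym2.mem_iff_exists.mp hvf
    have hGa : a ∈ G.neighborSet v := by
      have := e.2; rw [ha] at this; exact this
    have hGb : b ∈ G.neighborSet v := by
      have := f.2; rw [hb] at this; exact this
    have hFa : a ∉ F.neighborSet v := fun hFa => he (by rw [ha]; exact Subgraph.mem_edgeSet.mpr hFa)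
    have hFb : b ∉ F.neighborSet v := fun hFb => hf (by rw [hb]; exact Subgraph.mem_edgeSet.mpr hFb)
    have hab : a ≠ b := by
      rintro rfl
      exact hne (Subtype.ext (by rw [ha, hb]))
    have hfinG : (G.neighborSet v).Finite := Set.toFinite _
    have hsub := F.neighborSet_subset v
    have hcard : (G.neighborSet v \ F.neighborSet v).ncard = 1 := by
      rw [Set.ncard_diff hsub (Set.toFinite _), hcubic v, (hF.2 v)]
    obtain ⟨x, hx⟩ := Set.ncard_eq_one.mp hcard
    have hax : a ∈ G.neighborSet v \ F.neighborSet v := ⟨hGa, hFa⟩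
    have hbx : b ∈ G.neighborSet v \ F.neighborSet v := ⟨hGb, hFb⟩
    rw [hx] at hax hbx
    exact hab (hax.trans hbx.symm)
  -- distance ≥ 2 from non-adjacency
  have dist2 : ∀ e f : G.edgeSet, e ≠ f →
      (∀ v : V, ¬(v ∈ (e : Sym2 V) ∧ v ∈ (f : Sym2 V))) →
      (2 : ℕ∞) ≤ G.lineGraph.edist e f := by
    intro e f hne hnadj
    have h0 : G.lineGraph.edist e f ≠ 0 := by
      simp only [ne_eq, SimpleGraph.edist_eq_zero_iff]; exact hne
    have h1 : G.lineGraph.edist e f ≠ 1 := by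
      simp only [ne_eq, SimpleGraph.edist_eq_one_iff_adj, SimpleGraph.lineGraph_adj_iff_exists]
      rintro ⟨-, v, hv1, hv2⟩
      exact hnadj v ⟨hv1, hv2⟩
    have : (1 : ℕ∞) < G.lineGraph.edist e f :=
      lt_of_le_of_ne (ENat.one_le_iff_ne_zero.mpr h0) (Ne.symm h1)
    calc (2 : ℕ∞) = 1 + 1 := by norm_num
    _ ≤ G.lineGraph.edist e f := (ENat.add_one_le_iff (by simp)).mpr this
  -- the index function
  have hcollt : ∀ a : A, (col a : ℕ) < l := fun a => (col a).2
  let idx : G.edgeSet → ℕ := fun e =>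
    if he : (e : Sym2 V) ∈ A then 3 + (col ⟨(e : Sym2 V), he⟩ : ℕ)
    else if (e : Sym2 V) ∈ B then 1 else if (e : Sym2 V) ∈ C then 2 else 0
  have hidx : ∀ e, idx e < L.length := by
    intro e
    rw [hlen]
    simp only [idx]
    split
    · have := hcollt ⟨(e : Sym2 V), by assumption⟩; omega
    · split
      · omega
      · split <;> omega
  have key : ∀ e : G.edgeSet,
      (idx e = 0 ∧ (e : Sym2 V) ∉ F.edgeSet) ∨
      (idx e = 1 ∧ (e : Sym2 V) ∈ B) ∨
      (idx e = 2 ∧ (e : Sym2 V) ∈ C) ∨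
      (∃ he : (e : Sym2 V) ∈ A, idx e = 3 + (col ⟨(e : Sym2 V), he⟩ : ℕ)) := by
    intro e
    by_cases heA : (e : Sym2 V) ∈ A
    · exact Or.inr (Or.inr (Or.inr ⟨heA, by simp [idx, heA]⟩))
    · by_cases heB : (e : Sym2 V) ∈ B
      · exact Or.inr (Or.inl ⟨by simp [idx, heA, heB], heB⟩)
      · by_cases heC : (e : Sym2 V) ∈ C
        · exact Or.inr (Or.inr (Or.inl ⟨by simp [idx, heA, heB, heC], heC⟩))
        · refine Or.inl ⟨by simp [idx, heA, heB, heC], ?_⟩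
          intro hF
          rw [← hpart] at hF
          rcases hF with (h | h) | h
          · exact heA h
          · exact heB h
          · exact heC h
  refine ⟨fun e => ⟨idx e, hidx e⟩, ?_⟩
  intro e f hne hcf
  have hcf' : idx e = idx f := by
    have := congrArg Fin.val hcf
    simpa using this
  rw [hval (idx e) (hidx e)]
  rcases key e with ⟨h0e, hMe⟩ | ⟨h1e, hBe⟩ | ⟨h2e, hCe⟩ | ⟨hAe, hAe'⟩ <;>
    rcases key f with ⟨h0f, hMf⟩ | ⟨h1f, hBf⟩ | ⟨h2f, hCf⟩ | ⟨hAf, hAf'⟩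
  · rw [h0e]
    norm_num
    exact dist2 e f hne (hM e f hne hMe hMf)
  · omega
  · omega
  · exfalso; omega
  · omega
  · rw [h1e]
    norm_num
    refine dist2 e f hne ?_
    intro v hv
    exact hB.2.1 _ hBe _ hBf (fun h => hne (Subtype.ext h)) v hv
  · omega
  · exfalso; omega
  · omega
  · omega
  · rw [h2e]
    norm_num
    refine dist2 e f hne ?_
    intro v hv
    exact hC.2.1 _ hCe _ hCf (fun h => hne (Subtype.ext h)) v hv
  · exfalso; omega
  · exfalso; omega
  · exfalso; omega
  · exfalso; omega
  · rw [hAe']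
    rw [if_neg (by omega)]
    have hcoleq : col ⟨(e : Sym2 V), hAe⟩ = col ⟨(f : Sym2 V), hAf⟩ := by
      rw [hAe', hAf'] at hcf'
      exact Fin.ext (by omega)
    have hnadj : ¬ (distPowerGraph G k A).Adj ⟨(e : Sym2 V), hAe⟩ ⟨(f : Sym2 V), hAf⟩ := by
      intro hadj
      exact col.valid hadj hcoleq
    have hnev : (⟨(e : Sym2 V), hAe⟩ : A) ≠ ⟨(f : Sym2 V), hAf⟩ := by
      intro h
      simp only [Subtype.mk.injEq] at h
      exact hne (Subtype.ext h)
    have hdk : ¬ G.lineGraph.edist e f ≤ (k : ℕ∞) := by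
      intro hle
      exact hnadj ⟨hnev, e.2, f.2, by simpa using hle⟩
    have : (k : ℕ∞) < G.lineGraph.edist e f := lt_of_not_ge hdk
    exact (ENat.add_one_le_iff (by simp)).mpr this
end

section
/- Let G be a cubic graph having a 2-factor F, let k ≥ 2 and ℓ, ℓ' ≥ 1 be integers, and let A, B, C be a partition of E(F) such that A is of type I and B and C are of type II. If the chromatic number of G^k[A] is at most ℓ and the chromatic number of G^k[B] is at most ℓ', then G admits a (1,1,k^{ℓ+ℓ'})-packing edge-coloring (two colors of radius 1 and ℓ+ℓ' colors of radius k). -/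
open SimpleGraph

variable {V : Type*}

/-- If `E(F)` is partitioned into `A` of type I and `B`, `C` of type II, `G^k[A]` is
`ℓ`-colorable and `G^k[B]` is `ℓ'`-colorable, then `G` admits a
(1,1,k^(ℓ+ℓ'))-packing edge-coloring. -/
theorem statement_9 {V : Type*} [Fintype V] (G : SimpleGraph V)
    (hconn : G.Connected) (hcubic : IsCubicGraph G)
    (F : G.Subgraph) (hF : IsTwoFactor F)
    (k l l' : ℕ) (hk : 2 ≤ k) (hl : 1 ≤ l) (hl' : 1 ≤ l')
    (A B C : Set (Sym2 V))
    (hpart : A ∪ B ∪ C = F.edgeSet)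
    (hAB : Disjoint A B) (hAC : Disjoint A C) (hBC : Disjoint B C)
    (hA : IsTypeI F A) (hB : IsTypeII F B) (hC : IsTypeII F C)
    (hcolA : (distPowerGraph G k A).Colorable l)
    (hcolB : (distPowerGraph G k B).Colorable l') :
    HasPackingEdgeColoring G ([1, 1] ++ List.replicate (l + l') k) := by
  classical
  obtain ⟨cA⟩ := hcolA
  obtain ⟨cB⟩ := hcolB
  have hlen : ([1,1] ++ List.replicate (l + l') k).length = 2 + (l + l') := by simp; omega
  -- value of the list at each index
  have hget : ∀ i : Fin ([1,1] ++ List.replicate (l+l') k).length,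
      ([1,1] ++ List.replicate (l+l') k).get i = if i.1 < 2 then 1 else k := by
    rintro ⟨v, hv⟩
    rw [List.get_eq_getElem]
    match v, hv with
    | 0, _ => rfl
    | 1, _ => rfl
    | (n+2), hv =>
      simp only [List.cons_append, List.nil_append, List.getElem_cons_succ]
      rw [List.getElem_replicate]
      simp
  -- edges outside A∪B∪C are outside F
  have hnF : ∀ e : Sym2 V, e ∉ A → e ∉ B → e ∉ C → e ∉ F.edgeSet := by
    intro e h1 h2 h3 hF'
    rw [← hpart] at hF'
    rcases hF' with (h | h) | h
    exacts [h1 h, h2 h, h3 h]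
  -- non-F edges form a matching
  have hM : ∀ (e f : G.edgeSet), (e:Sym2 V) ∉ F.edgeSet → (f:Sym2 V) ∉ F.edgeSet →
      e ≠ f → ¬ G.lineGraph.Adj e f := by
    intro e f heF hfF hne hadj
    rw [lineGraph_adj_iff_exists] at hadj
    obtain ⟨-, v, hve, hvf⟩ := hadj
    obtain ⟨a, ha⟩ : ∃ a, s(v, a) = (e : Sym2 V) := ⟨_, Sym2.other_spec hve⟩
    obtain ⟨b, hb⟩ : ∃ b, s(v, b) = (f : Sym2 V) := ⟨_, Sym2.other_spec hvf⟩
    have hFa : a ∉ F.neighborSet v := fun h => heF (by rw [← ha]; exact Subgraph.mem_edgeSet.mpr h)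
    have hFb : b ∉ F.neighborSet v := fun h => hfF (by rw [← hb]; exact Subgraph.mem_edgeSet.mpr h)
    have hab : a ≠ b := by
      rintro rfl
      exact hne (Subtype.ext (by rw [← ha, ← hb]))
    have hsub : insert a (insert b (F.neighborSet v)) ⊆ G.neighborSet v := by
      intro x hx
      simp only [Set.mem_insert_iff] at hx
      rcases hx with rfl | rfl | hx
      · rw [mem_neighborSet, ← G.mem_edgeSet, ha]; exact e.2
      · rw [mem_neighborSet, ← G.mem_edgeSet, hb]; exact f.2
      · exact F.adj_sub hx
    have h4 : (insert a (insert b (F.neighborSet v))).ncard = 4 := by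
      rw [Set.ncard_insert_of_notMem (by simp [hab, hFa]) (Set.toFinite _),
          Set.ncard_insert_of_notMem hFb (Set.toFinite _), hF.2 v]
    have hle := Set.ncard_le_ncard hsub (Set.toFinite _)
    rw [h4, hcubic v] at hle
    omega
  -- distance ≥ 2 from non-adjacency
  have hdist2 : ∀ (e f : G.edgeSet), ¬ G.lineGraph.Adj e f → e ≠ f →
      (2 : ℕ∞) ≤ G.lineGraph.edist e f := by
    intro e f h hne
    have h0 : G.lineGraph.edist e f ≠ 0 := fun h' => hne (edist_eq_zero_iff.mp h')
    have h1 : G.lineGraph.edist e f ≠ 1 := fun h' => h (edist_eq_one_iff_adj.mp h')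
    have h2 : (1:ℕ∞) < G.lineGraph.edist e f :=
      lt_of_le_of_ne (ENat.one_le_iff_ne_zero.mpr h0) (Ne.symm h1)
    calc (2:ℕ∞) = 1 + 1 := by norm_num
      _ ≤ _ := (ENat.add_one_le_iff (by simp)).mpr h2
  -- distance > k within a color class of A
  have hdistA : ∀ (e f : G.edgeSet) (hea : (e:Sym2 V) ∈ A) (hfa : (f:Sym2 V) ∈ A), e ≠ f →
      cA ⟨↑e, hea⟩ = cA ⟨↑f, hfa⟩ → (k:ℕ∞) + 1 ≤ G.lineGraph.edist e f := by
    intro e f hea hfa hne hcc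
    have hnle : ¬ (G.lineGraph.edist e f ≤ (k:ℕ∞)) := by
      intro hle
      have hadj : (distPowerGraph G k A).Adj ⟨↑e, hea⟩ ⟨↑f, hfa⟩ := by
        refine ⟨fun h => hne (Subtype.ext (Subtype.mk_eq_mk.mp h)), e.2, f.2, ?_⟩
        exact hle
      exact cA.valid hadj hcc
    rw [not_le] at hnle
    exact (ENat.add_one_le_iff (ENat.coe_ne_top k)).mpr hnle
  have hdistB : ∀ (e f : G.edgeSet) (heb : (e:Sym2 V) ∈ B) (hfb : (f:Sym2 V) ∈ B), e ≠ f →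
      cB ⟨↑e, heb⟩ = cB ⟨↑f, hfb⟩ → (k:ℕ∞) + 1 ≤ G.lineGraph.edist e f := by
    intro e f heb hfb hne hcc
    have hnle : ¬ (G.lineGraph.edist e f ≤ (k:ℕ∞)) := by
      intro hle
      have hadj : (distPowerGraph G k B).Adj ⟨↑e, heb⟩ ⟨↑f, hfb⟩ := by
        refine ⟨fun h => hne (Subtype.ext (Subtype.mk_eq_mk.mp h)), e.2, f.2, ?_⟩
        exact hle
      exact cB.valid hadj hcc
    rw [not_le] at hnle
    exact (ENat.add_one_le_iff (ENat.coe_ne_top k)).mpr hnle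
  -- type II sets are matchings
  have hmatchC : ∀ (e f : G.edgeSet), (e:Sym2 V) ∈ C → (f:Sym2 V) ∈ C → e ≠ f →
      ¬ G.lineGraph.Adj e f := by
    intro e f hec hfc hne hadj
    rw [lineGraph_adj_iff_exists] at hadj
    obtain ⟨-, v, hv1, hv2⟩ := hadj
    exact hC.2.1 ↑e hec ↑f hfc (fun h => hne (Subtype.ext h)) v ⟨hv1, hv2⟩
  -- the index function
  let idx : G.edgeSet → ℕ := fun e =>
    if hea : (e:Sym2 V) ∈ A then 2 + (cA ⟨↑e, hea⟩).1
    else if heb : (e:Sym2 V) ∈ B then 2 + l + (cB ⟨↑e, heb⟩).1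
    else if (e:Sym2 V) ∈ C then 1 else 0
  have idxA : ∀ (e : G.edgeSet) (h : (e:Sym2 V) ∈ A), idx e = 2 + (cA ⟨↑e, h⟩).1 :=
    fun e h => dif_pos h
  have idxB : ∀ (e : G.edgeSet) (h1 : (e:Sym2 V) ∉ A) (h2 : (e:Sym2 V) ∈ B),
      idx e = 2 + l + (cB ⟨↑e, h2⟩).1 := by
    intro e h1 h2
    show (if hea : (e:Sym2 V) ∈ A then 2 + (cA ⟨↑e, hea⟩).1
      else if heb : (e:Sym2 V) ∈ B then 2 + l + (cB ⟨↑e, heb⟩).1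
      else if (e:Sym2 V) ∈ C then 1 else 0) = _
    rw [dif_neg h1, dif_pos h2]
  have idxC : ∀ (e : G.edgeSet), (e:Sym2 V) ∉ A → (e:Sym2 V) ∉ B → (e:Sym2 V) ∈ C →
      idx e = 1 := by
    intro e h1 h2 h3
    show (if hea : (e:Sym2 V) ∈ A then 2 + (cA ⟨↑e, hea⟩).1
      else if heb : (e:Sym2 V) ∈ B then 2 + l + (cB ⟨↑e, heb⟩).1
      else if (e:Sym2 V) ∈ C then 1 else 0) = _
    rw [dif_neg h1, dif_neg h2, if_pos h3]
  have idx0 : ∀ (e : G.edgeSet), (e:Sym2 V) ∉ A → (e:Sym2 V) ∉ B → (e:Sym2 V) ∉ C →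
      idx e = 0 := by
    intro e h1 h2 h3
    show (if hea : (e:Sym2 V) ∈ A then 2 + (cA ⟨↑e, hea⟩).1
      else if heb : (e:Sym2 V) ∈ B then 2 + l + (cB ⟨↑e, heb⟩).1
      else if (e:Sym2 V) ∈ C then 1 else 0) = _
    rw [dif_neg h1, dif_neg h2, if_neg h3]
  have hidx : ∀ e, idx e < ([1,1] ++ List.replicate (l + l') k).length := by
    intro e
    rw [hlen]
    by_cases h1 : (e:Sym2 V) ∈ A
    · rw [idxA e h1]; have := (cA ⟨↑e, h1⟩).isLt; omega
    · by_cases h2 : (e:Sym2 V) ∈ B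
      · rw [idxB e h1 h2]; have := (cB ⟨↑e, h2⟩).isLt; omega
      · by_cases h3 : (e:Sym2 V) ∈ C
        · rw [idxC e h1 h2 h3]; omega
        · rw [idx0 e h1 h2 h3]; omega
  refine ⟨fun e => ⟨idx e, hidx e⟩, ?_⟩
  intro e f hne hc
  have hval : idx e = idx f := congrArg Fin.val hc
  rw [hget]
  show ((if (idx e) < 2 then 1 else k : ℕ) : ℕ∞) + 1 ≤ G.lineGraph.edist e f
  by_cases hea : (e:Sym2 V) ∈ A
  · rw [idxA e hea] at hval ⊢
    rw [if_neg (by omega)]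
    by_cases hfa : (f:Sym2 V) ∈ A
    · rw [idxA f hfa] at hval
      exact hdistA e f hea hfa hne (Fin.ext (by omega))
    · exfalso
      by_cases hfb : (f:Sym2 V) ∈ B
      · rw [idxB f hfa hfb] at hval
        have := (cA ⟨↑e, hea⟩).isLt; omega
      · by_cases hfc : (f:Sym2 V) ∈ C
        · rw [idxC f hfa hfb hfc] at hval; omega
        · rw [idx0 f hfa hfb hfc] at hval; omega
  · by_cases heb : (e:Sym2 V) ∈ B
    · rw [idxB e hea heb] at hval ⊢
      rw [if_neg (by omega)]
      by_cases hfa : (f:Sym2 V) ∈ A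
      · exfalso
        rw [idxA f hfa] at hval
        have := (cA ⟨↑f, hfa⟩).isLt; omega
      · by_cases hfb : (f:Sym2 V) ∈ B
        · rw [idxB f hfa hfb] at hval
          exact hdistB e f heb hfb hne (Fin.ext (by omega))
        · exfalso
          by_cases hfc : (f:Sym2 V) ∈ C
          · rw [idxC f hfa hfb hfc] at hval; omega
          · rw [idx0 f hfa hfb hfc] at hval; omega
    · by_cases hec : (e:Sym2 V) ∈ C
      · rw [idxC e hea heb hec] at hval ⊢
        rw [if_pos (by omega)]
        by_cases hfa : (f:Sym2 V) ∈ A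
        · exfalso; rw [idxA f hfa] at hval; omega
        · by_cases hfb : (f:Sym2 V) ∈ B
          · exfalso; rw [idxB f hfa hfb] at hval; omega
          · by_cases hfc : (f:Sym2 V) ∈ C
            · have := hdist2 e f (hmatchC e f hec hfc hne) hne
              exact le_trans (by norm_num) this
            · exfalso; rw [idx0 f hfa hfb hfc] at hval; omega
      · rw [idx0 e hea heb hec] at hval ⊢
        rw [if_pos (by omega)]
        by_cases hfa : (f:Sym2 V) ∈ A
        · exfalso; rw [idxA f hfa] at hval; omega
        · by_cases hfb : (f:Sym2 V) ∈ B
          · exfalso; rw [idxB f hfa hfb] at hval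
            have := (cB ⟨↑f, hfb⟩).isLt; omega
          · by_cases hfc : (f:Sym2 V) ∈ C
            · exfalso; rw [idxC f hfa hfb hfc] at hval; omega
            · have hnadj := hM e f (hnF ↑e hea heb hec) (hnF ↑f hfa hfb hfc) hne
              have := hdist2 e f hnadj hne
              exact le_trans (by norm_num) this
end

section
/- Let G be a simple graph of maximum degree at most 3 having a 2-factor F, and suppose G has girth at least 7 (G contains no cycle of length less than 7). Then for every set B ⊆ E(F) of type II, the graph G^2[B] contains no triangle. -/
open SimpleGraph

variable {V : Type*}

lemma connector {G : SimpleGraph V} (e f : G.edgeSet) (hne : (e : Sym2 V) ≠ (f : Sym2 V))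
    (hdisj : ∀ v : V, ¬(v ∈ (e : Sym2 V) ∧ v ∈ (f : Sym2 V)))
    (h : G.lineGraph.edist e f ≤ 2) :
    ∃ x y : V, x ∈ (e : Sym2 V) ∧ y ∈ (f : Sym2 V) ∧ G.Adj x y := by
  have htop : G.lineGraph.edist e f ≠ ⊤ := fun ht => by simp [ht] at h
  obtain ⟨p, hp⟩ := exists_walk_of_edist_ne_top htop
  have hlen : p.length ≤ 2 := by
    have : (p.length : ℕ∞) ≤ 2 := hp ▸ h
    exact_mod_cast this
  cases p with
  | nil => exact absurd rfl (fun h' => hne (congrArg Subtype.val h'))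
  | cons h1 q =>
    cases q with
    | nil =>
      rw [lineGraph_adj_iff_exists] at h1
      obtain ⟨-, v, hv1, hv2⟩ := h1
      exact absurd ⟨hv1, hv2⟩ (hdisj v)
    | cons h2 r =>
      cases r with
      | nil =>
        rename_i g
        rw [lineGraph_adj_iff_exists] at h1 h2
        obtain ⟨-, x, hxe, hxg⟩ := h1
        obtain ⟨-, y, hyg, hyf⟩ := h2
        have hxy : x ≠ y := fun hh => hdisj x ⟨hxe, hh ▸ hyf⟩
        have hg : (g : Sym2 V) = s(x, y) := (Sym2.mem_and_mem_iff hxy).mp ⟨hxg, hyg⟩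
        have : G.Adj x y := by
          have hg2 := g.2
          rw [hg, mem_edgeSet] at hg2
          exact hg2
        exact ⟨x, y, hxe, hyf, this⟩
      | cons h3 s => simp [Walk.length_cons] at hlen


private lemma cyc3' {G : SimpleGraph V} {a b c : V} (hab : G.Adj a b) (hbc : G.Adj b c)
    (hca : G.Adj c a) : ∃ (v : V) (w : G.Walk v v), w.IsCycle ∧ w.length ≤ 6 := by
  refine ⟨a, .cons hab (.cons hbc (.cons hca .nil)), ?_, by simp⟩
  simp [Walk.isCycle_def, Walk.isTrail_def, hab.ne, hbc.ne, hca.ne, hab.ne', hbc.ne', hca.ne']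

private lemma cyc4' {G : SimpleGraph V} {a b c d : V} (hab : G.Adj a b) (hbc : G.Adj b c)
    (hcd : G.Adj c d) (hda : G.Adj d a) (hac : a ≠ c) (hbd : b ≠ d) :
    ∃ (v : V) (w : G.Walk v v), w.IsCycle ∧ w.length ≤ 6 := by
  refine ⟨a, .cons hab (.cons hbc (.cons hcd (.cons hda .nil))), ?_, by simp⟩
  simp [Walk.isCycle_def, Walk.isTrail_def, hab.ne, hbc.ne, hcd.ne, hda.ne, hab.ne', hbc.ne',
    hcd.ne', hda.ne', hac, hbd, hac.symm, hbd.symm]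

private lemma cyc5' {G : SimpleGraph V} {a b c d e : V} (h1 : G.Adj a b) (h2 : G.Adj b c)
    (h3 : G.Adj c d) (h4 : G.Adj d e) (h5 : G.Adj e a)
    (hac : a ≠ c) (had : a ≠ d) (hbd : b ≠ d) (hbe : b ≠ e) (hce : c ≠ e) :
    ∃ (v : V) (w : G.Walk v v), w.IsCycle ∧ w.length ≤ 6 := by
  refine ⟨a, .cons h1 (.cons h2 (.cons h3 (.cons h4 (.cons h5 .nil)))), ?_, by simp⟩
  simp [Walk.isCycle_def, Walk.isTrail_def, h1.ne, h2.ne, h3.ne, h4.ne, h5.ne,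
    h1.ne', h2.ne', h3.ne', h4.ne', h5.ne', hac, had, hbd, hbe, hce,
    hac.symm, had.symm, hbd.symm, hbe.symm, hce.symm]

private lemma cyc6' {G : SimpleGraph V} {a b c d e f : V} (h1 : G.Adj a b) (h2 : G.Adj b c)
    (h3 : G.Adj c d) (h4 : G.Adj d e) (h5 : G.Adj e f) (h6 : G.Adj f a)
    (hac : a ≠ c) (had : a ≠ d) (hae : a ≠ e) (hbd : b ≠ d) (hbe : b ≠ e) (hbf : b ≠ f)
    (hce : c ≠ e) (hcf : c ≠ f) (hdf : d ≠ f) :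
    ∃ (v : V) (w : G.Walk v v), w.IsCycle ∧ w.length ≤ 6 := by
  refine ⟨a, .cons h1 (.cons h2 (.cons h3 (.cons h4 (.cons h5 (.cons h6 .nil))))), ?_, by simp⟩
  simp [Walk.isCycle_def, Walk.isTrail_def, h1.ne, h2.ne, h3.ne, h4.ne, h5.ne, h6.ne,
    h1.ne', h2.ne', h3.ne', h4.ne', h5.ne', h6.ne',
    hac, had, hae, hbd, hbe, hbf, hce, hcf, hdf,
    hac.symm, had.symm, hae.symm, hbd.symm, hbe.symm, hbf.symm, hce.symm, hcf.symm, hdf.symm]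

private lemma buildCycle {G : SimpleGraph V} {e1 e2 e3 : Sym2 V} {a a' b b' c c' : V}
    (ha : a ∈ e1) (ha' : a' ∈ e1) (hb : b ∈ e2) (hb' : b' ∈ e2) (hc : c ∈ e3) (hc' : c' ∈ e3)
    (h12 : ∀ v : V, ¬(v ∈ e1 ∧ v ∈ e2)) (h23 : ∀ v : V, ¬(v ∈ e2 ∧ v ∈ e3))
    (h13 : ∀ v : V, ¬(v ∈ e1 ∧ v ∈ e3))
    (hA : a = a' ∨ G.Adj a a') (hB : b = b' ∨ G.Adj b b') (hC : c = c' ∨ G.Adj c c')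
    (hab : G.Adj a' b) (hbc : G.Adj b' c) (hca : G.Adj c' a) :
    ∃ (v : V) (w : G.Walk v v), w.IsCycle ∧ w.length ≤ 6 := by
  have nab : a ≠ b := fun h => h12 a ⟨ha, h ▸ hb⟩
  have nab' : a ≠ b' := fun h => h12 a ⟨ha, h ▸ hb'⟩
  have na'b : a' ≠ b := fun h => h12 a' ⟨ha', h ▸ hb⟩
  have na'b' : a' ≠ b' := fun h => h12 a' ⟨ha', h ▸ hb'⟩
  have nac : a ≠ c := fun h => h13 a ⟨ha, h ▸ hc⟩
  have nac' : a ≠ c' := fun h => h13 a ⟨ha, h ▸ hc'⟩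
  have na'c : a' ≠ c := fun h => h13 a' ⟨ha', h ▸ hc⟩
  have na'c' : a' ≠ c' := fun h => h13 a' ⟨ha', h ▸ hc'⟩
  have nbc : b ≠ c := fun h => h23 b ⟨hb, h ▸ hc⟩
  have nbc' : b ≠ c' := fun h => h23 b ⟨hb, h ▸ hc'⟩
  have nb'c : b' ≠ c := fun h => h23 b' ⟨hb', h ▸ hc⟩
  have nb'c' : b' ≠ c' := fun h => h23 b' ⟨hb', h ▸ hc'⟩
  rcases hA with rfl | hA <;> rcases hB with rfl | hB <;> rcases hC with rfl | hC
  · exact cyc3' hab hbc hca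
  · exact cyc4' hbc hC hca hab nbc' nac.symm
  · exact cyc4' hab hB hbc hca nab' nbc
  · exact cyc5' hab hB hbc hC hca nab' nac nbc nbc' nb'c'
  · exact cyc4' hca hA hab hbc na'c.symm nab
  · exact cyc5' hA hab hbc hC hca nab nac na'c na'c' nbc'
  · exact cyc5' hA hab hB hbc hca nab nab' na'b' na'c nbc
  · exact cyc6' hA hab hB hbc hC hca nab nab' nac na'b' na'c na'c' nbc nbc' nb'c'

private lemma sameEdge' {G : SimpleGraph V} {z : Sym2 V} (hz : z ∈ G.edgeSet) {x y : V}
    (hx : x ∈ z) (hy : y ∈ z) : x = y ∨ G.Adj x y := by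
  by_cases h : x = y
  · exact Or.inl h
  · right
    have hzz := (Sym2.mem_and_mem_iff h).mp ⟨hx, hy⟩
    rwa [hzz, mem_edgeSet] at hz

/-- Let `G` be a subcubic graph with a 2-factor `F` and girth at least 7. Then for every set
`B ⊆ E(F)` of type II, the graph `G²[B]` contains no triangle. -/
theorem statement_14 {V : Type*} [Fintype V] (G : SimpleGraph V)
    (hsub : ∀ v, (G.neighborSet v).ncard ≤ 3)
    (F : G.Subgraph) (hF : IsTwoFactor F)
    (hgirth : ∀ (v : V) (w : G.Walk v v), w.IsCycle → 7 ≤ w.length)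
    (B : Set (Sym2 V)) (hB : IsTypeII F B) :
    (distPowerGraph G 2 B).CliqueFree 3 := by
  classical
  intro t ht
  obtain ⟨e1, e2, e3, h12, h13, h23, rfl⟩ := Finset.card_eq_three.mp ht.2
  have a12 := ht.1 (by simp) (by simp : e2 ∈ _) h12
  have a23 := ht.1 (by simp : e2 ∈ _) (by simp : e3 ∈ _) h23
  have a31 := ht.1 (by simp : e3 ∈ _) (by simp) h13.symm
  obtain ⟨-, he1, he2, hd12⟩ := a12
  obtain ⟨-, he2', he3, hd23⟩ := a23
  obtain ⟨-, he3', he1', hd31⟩ := a31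
  have v12 : (e1 : Sym2 V) ≠ (e2 : Sym2 V) := fun h => h12 (Subtype.ext h)
  have v23 : (e2 : Sym2 V) ≠ (e3 : Sym2 V) := fun h => h23 (Subtype.ext h)
  have v13 : (e1 : Sym2 V) ≠ (e3 : Sym2 V) := fun h => h13 (Subtype.ext h)
  have dj12 : ∀ v : V, ¬(v ∈ (e1 : Sym2 V) ∧ v ∈ (e2 : Sym2 V)) :=
    hB.2.1 e1 e1.2 e2 e2.2 v12
  have dj23 : ∀ v : V, ¬(v ∈ (e2 : Sym2 V) ∧ v ∈ (e3 : Sym2 V)) :=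
    hB.2.1 e2 e2.2 e3 e3.2 v23
  have dj13 : ∀ v : V, ¬(v ∈ (e1 : Sym2 V) ∧ v ∈ (e3 : Sym2 V)) :=
    hB.2.1 e1 e1.2 e3 e3.2 v13
  obtain ⟨x12, x21, hx12, hx21, hadj12⟩ := connector (G := G) ⟨e1, he1⟩ ⟨e2, he2⟩ v12 dj12
    (by exact_mod_cast hd12)
  obtain ⟨x23, x32, hx23, hx32, hadj23⟩ := connector (G := G) ⟨e2, he2'⟩ ⟨e3, he3⟩ v23 dj23
    (by exact_mod_cast hd23)
  obtain ⟨x31, x13, hx31, hx13, hadj31⟩ := connector (G := G) ⟨e3, he3'⟩ ⟨e1, he1'⟩ v13.symm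
    (fun v hv => dj13 v ⟨hv.2, hv.1⟩) (by exact_mod_cast hd31)
  have hA := sameEdge' he1 hx13 hx12
  have hBB := sameEdge' he2' hx21 hx23
  have hC := sameEdge' he3 hx32 hx31
  obtain ⟨v, w, hcyc, hlen⟩ := buildCycle hx13 hx12 hx21 hx23 hx32 hx31 dj12 dj23 dj13
    hA hBB hC hadj12 hadj23 hadj31
  have := hgirth v w hcyc
  omega
end
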